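/- arXiv:1706.10258 — 8 statements merged into one kernel-verified Lean document; each statement's English description precedes it below -/
import Mathlib

section
/- For every integer n ≥ 1 there is a ring isomorphism ℤ[x_1,…,x_{n+1}]/(σ_1,…,σ_{n+1}) ≅ ℤ[x_1,…,x_n]/(ξ'_2,…,ξ'_{n+1}), where σ_1,…,σ_{n+1} are the elementary symmetric polynomials in x_1,…,x_{n+1}, and for 2 ≤ l ≤ n+1, ξ'_l = (1−l)·∑_{1≤i_1<⋯<i_l≤n} x_{i_1}⋯x_{i_l} − ∑ x_{i_1}⋯x_{i_{l−2}}·x_k², the second sum running over all 1 ≤ i_1 < ⋯ < i_{l−2} ≤ n and all 1 ≤ k ≤ n with k ∉ {i_1,…,i_{l−2}}. -/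
open MvPolynomial
open Finset

lemma last_notMem (n : ℕ) {s : Finset (Fin n)} : Fin.last n ∉ s.map Fin.castSuccEmb := by
  rw [Finset.mem_map]
  rintro ⟨x, -, hx⟩
  exact (Fin.castSucc_lt_last x).ne hx

lemma univ_fin_succ (n : ℕ) : (Finset.univ : Finset (Fin (n+1))) =
    insert (Fin.last n) (Finset.univ.map Fin.castSuccEmb) := by
  rw [← Fin.Iio_last_eq_map, Finset.Iio_insert]
  exact (Finset.ext fun x => by simp [Fin.le_last]).symm

lemma esymm_succ_decomp (n l : ℕ) (hl : 1 ≤ l) :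
    esymm (Fin (n+1)) ℤ l =
      (rename Fin.castSucc) (esymm (Fin n) ℤ l)
        + (rename Fin.castSucc) (esymm (Fin n) ℤ (l-1)) * X (Fin.last n) := by
  obtain ⟨m, rfl⟩ := Nat.exists_eq_add_of_le hl
  have h1m : 1 + m = m + 1 := Nat.add_comm 1 m
  simp only [esymm, map_sum, map_prod, rename_X, Nat.add_sub_cancel_left, h1m,
    Nat.add_sub_cancel] at *
  rw [univ_fin_succ, powersetCard_succ_insert (last_notMem n), Finset.sum_union]
  · congr 1
    · rw [Finset.powersetCard_map, Finset.sum_map]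
      refine Finset.sum_congr rfl fun s hs => ?_
      show ∏ i ∈ s.map Fin.castSuccEmb, X i = _
      rw [Finset.prod_map]
      rfl
    · have hinj : ∀ s ∈ Finset.powersetCard m ((Finset.univ : Finset (Fin n)).map Fin.castSuccEmb),
          ∀ t ∈ Finset.powersetCard m ((Finset.univ : Finset (Fin n)).map Fin.castSuccEmb),
          insert (Fin.last n) s = insert (Fin.last n) t → s = t := by
        intro s hs t ht hst
        have hls : Fin.last n ∉ s := fun h =>
          last_notMem n ((Finset.mem_powersetCard.mp hs).1 h)
        have hlt : Fin.last n ∉ t := fun h =>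
          last_notMem n ((Finset.mem_powersetCard.mp ht).1 h)
        rw [← Finset.erase_insert hls, ← Finset.erase_insert hlt, hst]
      rw [Finset.sum_mul, Finset.sum_image hinj, Finset.powersetCard_map, Finset.sum_map]
      refine Finset.sum_congr rfl fun s hs => ?_
      show ∏ i ∈ insert (Fin.last n) (s.map Fin.castSuccEmb), X i = _
      rw [Finset.prod_insert (last_notMem n), Finset.prod_map, mul_comm]
      rfl
  · rw [Finset.disjoint_right]
    intro a ha ha'
    obtain ⟨s, hs, rfl⟩ := Finset.mem_image.mp ha
    have := (Finset.mem_powersetCard.mp ha').1 (Finset.mem_insert_self _ _)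
    exact last_notMem n (Finset.mem_of_subset (by rfl) this)

lemma esymm_mul_sum (n m : ℕ) :
    esymm (Fin n) ℤ (m+1) * (∑ k, X k) =
      C ((m+2 : ℕ) : ℤ) * esymm (Fin n) ℤ (m+2)
        + ∑ t ∈ (Finset.univ : Finset (Fin n)).powersetCard m,
            ∑ k ∈ Finset.univ \ t, (∏ i ∈ t, X i) * X k ^ 2 := by
  rw [esymm, Finset.sum_mul]
  have split : ∀ s ∈ (Finset.univ : Finset (Fin n)).powersetCard (m+1),
      (∏ i ∈ s, X i) * (∑ k, (X k : MvPolynomial (Fin n) ℤ)) =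
      (∑ k ∈ Finset.univ \ s, (∏ i ∈ s, X i) * X k)
        + ∑ k ∈ s, (∏ i ∈ s, X i) * X k := by
    intro s _
    rw [Finset.mul_sum, ← Finset.sum_sdiff (Finset.subset_univ s)]
  rw [Finset.sum_congr rfl split, Finset.sum_add_distrib]
  congr 1
  · -- part B : sum over k ∉ s equals (m+2) * esymm (m+2)
    rw [Finset.sum_sigma', esymm, Finset.mul_sum]
    have : ∀ u ∈ (Finset.univ : Finset (Fin n)).powersetCard (m+2),
        C ((m+2 : ℕ) : ℤ) * ∏ i ∈ u, X i = ∑ k ∈ u, ∏ i ∈ u, X i := by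
      intro u hu
      rw [Finset.sum_const, (Finset.mem_powersetCard.mp hu).2]
      simp [C_eq_smul_one, mul_comm]
    rw [Finset.sum_congr rfl this, Finset.sum_sigma']
    refine Finset.sum_nbij' (fun p => ⟨insert p.2 p.1, p.2⟩) (fun p => ⟨p.1.erase p.2, p.2⟩)
      ?_ ?_ ?_ ?_ ?_
    · rintro ⟨s, k⟩ hp
      simp only [Finset.mem_sigma, Finset.mem_powersetCard_univ, Finset.mem_sdiff] at hp ⊢
      exact ⟨by rw [Finset.card_insert_of_notMem hp.2.2, hp.1], Finset.mem_insert_self _ _⟩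
    · rintro ⟨u, k⟩ hp
      simp only [Finset.mem_sigma, Finset.mem_powersetCard_univ, Finset.mem_sdiff] at hp ⊢
      exact ⟨by rw [Finset.card_erase_of_mem hp.2, hp.1]; omega, Finset.mem_univ _,
        Finset.notMem_erase _ _⟩
    · rintro ⟨s, k⟩ hp
      simp only [Finset.mem_sigma, Finset.mem_powersetCard_univ, Finset.mem_sdiff] at hp
      simp [Finset.erase_insert hp.2.2]
    · rintro ⟨u, k⟩ hp
      simp only [Finset.mem_sigma, Finset.mem_powersetCard_univ] at hp
      simp [Finset.insert_erase hp.2]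
    · rintro ⟨s, k⟩ hp
      simp only [Finset.mem_sigma, Finset.mem_powersetCard_univ, Finset.mem_sdiff] at hp
      rw [Finset.prod_insert hp.2.2, mul_comm]
  · -- part A : sum over k ∈ s
    rw [Finset.sum_sigma', Finset.sum_sigma']
    refine Finset.sum_nbij' (fun p => ⟨p.1.erase p.2, p.2⟩) (fun p => ⟨insert p.2 p.1, p.2⟩)
      ?_ ?_ ?_ ?_ ?_
    · rintro ⟨s, k⟩ hp
      simp only [Finset.mem_sigma, Finset.mem_powersetCard_univ, Finset.mem_sdiff] at hp ⊢
      exact ⟨by rw [Finset.card_erase_of_mem hp.2, hp.1]; omega, Finset.mem_univ _,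
        Finset.notMem_erase _ _⟩
    · rintro ⟨t, k⟩ hp
      simp only [Finset.mem_sigma, Finset.mem_powersetCard_univ, Finset.mem_sdiff] at hp ⊢
      exact ⟨by rw [Finset.card_insert_of_notMem hp.2.2, hp.1], Finset.mem_insert_self _ _⟩
    · rintro ⟨s, k⟩ hp
      simp only [Finset.mem_sigma, Finset.mem_powersetCard_univ] at hp
      simp [Finset.insert_erase hp.2]
    · rintro ⟨t, k⟩ hp
      simp only [Finset.mem_sigma, Finset.mem_powersetCard_univ, Finset.mem_sdiff] at hp
      simp [Finset.erase_insert hp.2.2]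
    · rintro ⟨s, k⟩ hp
      simp only [Finset.mem_sigma, Finset.mem_powersetCard_univ] at hp
      rw [← Finset.prod_erase_mul s _ hp.2, sq]
      ring

noncomputable def subF (n : ℕ) : Fin (n+1) → MvPolynomial (Fin n) ℤ :=
  Fin.lastCases (- ∑ i, X i) (fun j => X j)

noncomputable def phiHom (n : ℕ) : MvPolynomial (Fin (n+1)) ℤ →ₐ[ℤ] MvPolynomial (Fin n) ℤ :=
  aeval (subF n)

noncomputable def psiHom (n : ℕ) : MvPolynomial (Fin n) ℤ →ₐ[ℤ] MvPolynomial (Fin (n+1)) ℤ :=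
  rename Fin.castSucc

lemma phi_psi (n : ℕ) (q : MvPolynomial (Fin n) ℤ) : phiHom n (psiHom n q) = q := by
  rw [phiHom, psiHom, aeval_rename]
  have : (subF n) ∘ Fin.castSucc = (X : Fin n → MvPolynomial (Fin n) ℤ) := by
    funext j; simp [subF]
  rw [this]
  exact aeval_X_left_apply q

lemma sub_psi_phi_mem (n : ℕ) (p : MvPolynomial (Fin (n+1)) ℤ) :
    p - psiHom n (phiHom n p) ∈ Ideal.span {esymm (Fin (n+1)) ℤ 1} := by
  induction p using MvPolynomial.induction_on with
  | C a => simp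
  | add p q hp hq =>
    have : p + q - psiHom n (phiHom n (p + q))
        = (p - psiHom n (phiHom n p)) + (q - psiHom n (phiHom n q)) := by
      simp only [map_add]; ring
    rw [this]; exact Ideal.add_mem _ hp hq
  | mul_X p i hp =>
    induction i using Fin.lastCases with
    | last =>
      have hXlast : phiHom n (X (Fin.last n)) = - ∑ j, (X j : MvPolynomial (Fin n) ℤ) := by
        simp [phiHom, subF]
      have key : X (Fin.last n) - psiHom n (phiHom n (X (Fin.last n)))
          = esymm (Fin (n+1)) ℤ 1 - (∑ j : Fin (n+1), X j - X (Fin.last n)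
              - psiHom n (∑ j : Fin n, X j)) := by
        rw [hXlast, esymm_one, map_neg]
        ring
      have hzero : (∑ j : Fin (n+1), (X j : MvPolynomial (Fin (n+1)) ℤ)) - X (Fin.last n)
          - psiHom n (∑ j : Fin n, X j) = 0 := by
        rw [psiHom, map_sum]
        simp only [rename_X]
        rw [univ_fin_succ, Finset.sum_insert (last_notMem n), Finset.sum_map]
        simp only [Fin.coe_castSuccEmb]
        ring
      have : p * X (Fin.last n) - psiHom n (phiHom n (p * X (Fin.last n)))
          = (p - psiHom n (phiHom n p)) * X (Fin.last n)
            + psiHom n (phiHom n p) * (X (Fin.last n) - psiHom n (phiHom n (X (Fin.last n)))) := by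
        simp only [map_mul]; ring
      rw [this]
      refine Ideal.add_mem _ (Ideal.mul_mem_right _ _ hp) ?_
      rw [key, hzero, sub_zero]
      exact Ideal.mul_mem_left _ _ (Ideal.subset_span rfl)
    | cast j =>
      have hXj : psiHom n (phiHom n (X (Fin.castSucc j)))
          = X (Fin.castSucc j) := by simp [phiHom, psiHom, subF]
      have : p * X (Fin.castSucc j) - psiHom n (phiHom n (p * X (Fin.castSucc j)))
          = (p - psiHom n (phiHom n p)) * X (Fin.castSucc j) := by
        simp only [map_mul, hXj]; ring
      rw [this]
      exact Ideal.mul_mem_right _ _ hp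

/-- The polynomial `ξ'_l ∈ ℤ[x_1,…,x_n]`:
`ξ'_l = (1−l)·∑_{1≤i_1<⋯<i_l≤n} x_{i_1}⋯x_{i_l} − ∑ x_{i_1}⋯x_{i_{l−2}}·x_k²`,
the second sum over all `1 ≤ i_1 < ⋯ < i_{l−2} ≤ n` and `1 ≤ k ≤ n` with
`k ∉ {i_1,…,i_{l−2}}`. -/
noncomputable def xiPoly' (n l : ℕ) : MvPolynomial (Fin n) ℤ :=
  C (1 - (l : ℤ)) * ∑ s ∈ (Finset.univ : Finset (Fin n)).powersetCard l, ∏ i ∈ s, X i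
    - ∑ s ∈ (Finset.univ : Finset (Fin n)).powersetCard (l - 2),
        ∑ k ∈ Finset.univ \ s, (∏ i ∈ s, X i) * X k ^ 2

lemma phi_rename (n : ℕ) (q : MvPolynomial (Fin n) ℤ) :
    phiHom n ((rename Fin.castSucc) q) = q := phi_psi n q

lemma phi_X_last (n : ℕ) : phiHom n (X (Fin.last n)) = - ∑ i, X i := by
  simp [phiHom, subF]

lemma phi_esymm_one (n : ℕ) : phiHom n (esymm (Fin (n+1)) ℤ 1) = 0 := by
  rw [esymm_succ_decomp n 1 le_rfl, map_add, map_mul, phi_rename, phi_rename, phi_X_last]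
  simp [esymm_one]

lemma phi_esymm (n l : ℕ) (hl : 2 ≤ l) :
    phiHom n (esymm (Fin (n+1)) ℤ l) = xiPoly' n l := by
  obtain ⟨m, rfl⟩ := Nat.exists_eq_add_of_le hl
  have h2m : 2 + m = m + 2 := Nat.add_comm 2 m
  rw [h2m]
  rw [esymm_succ_decomp n (m+2) (by omega), map_add, map_mul, phi_rename, phi_rename, phi_X_last]
  have : (m + 2 : ℕ) - 1 = m + 1 := rfl
  rw [this, mul_neg, esymm_mul_sum n m]
  rw [xiPoly']
  have h2 : (m + 2 : ℕ) - 2 = m := rfl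
  rw [h2, esymm]
  have hc : (C (1 - ((m+2 : ℕ) : ℤ)) : MvPolynomial (Fin n) ℤ)
      = 1 - C (((m+2 : ℕ)) : ℤ) := by rw [map_sub, map_one]
  rw [hc]
  ring

/-- For every `n ≥ 1` there is a ring isomorphism
`ℤ[x_1,…,x_{n+1}]/(σ_1,…,σ_{n+1}) ≅ ℤ[x_1,…,x_n]/(ξ'_2,…,ξ'_{n+1})`. -/
theorem quotient_esymm_iso_quotient_xi (n : ℕ) (hn : 1 ≤ n) :
    Nonempty
      ((MvPolynomial (Fin (n + 1)) ℤ ⧸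
          Ideal.span ((fun l => esymm (Fin (n + 1)) ℤ l) '' Set.Icc 1 (n + 1)))
        ≃+*
       (MvPolynomial (Fin n) ℤ ⧸ Ideal.span (xiPoly' n '' Set.Icc 2 (n + 1)))) := by
  set I : Ideal (MvPolynomial (Fin (n+1)) ℤ) :=
    Ideal.span ((fun l => esymm (Fin (n + 1)) ℤ l) '' Set.Icc 1 (n + 1)) with hI
  set J : Ideal (MvPolynomial (Fin n) ℤ) :=
    Ideal.span (xiPoly' n '' Set.Icc 2 (n + 1)) with hJ
  have hsigma1 : esymm (Fin (n+1)) ℤ 1 ∈ I := by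
    refine Ideal.subset_span ⟨1, ?_, rfl⟩
    simp [Set.mem_Icc]
  have hspan1 : Ideal.span {esymm (Fin (n+1)) ℤ 1} ≤ I := by
    rw [Ideal.span_le, Set.singleton_subset_iff]; exact hsigma1
  -- the forward map
  set F : MvPolynomial (Fin (n+1)) ℤ →+* MvPolynomial (Fin n) ℤ ⧸ J :=
    (Ideal.Quotient.mk J).comp (phiHom n).toRingHom with hF
  have hIF : ∀ a ∈ I, F a = 0 := by
    intro a ha
    refine RingHom.mem_ker.mp (Ideal.span_le.mpr ?_ (hI ▸ ha))
    rintro _ ⟨l, hl, rfl⟩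
    simp only [Set.mem_Icc] at hl
    simp only [SetLike.mem_coe, RingHom.mem_ker, hF, RingHom.comp_apply, AlgHom.toRingHom_eq_coe,
      RingHom.coe_coe]
    rcases Nat.lt_or_ge l 2 with h2 | h2
    · have : l = 1 := by omega
      subst this
      rw [phi_esymm_one]
      exact map_zero _
    · rw [phi_esymm n l h2]
      rw [Ideal.Quotient.eq_zero_iff_mem]
      exact Ideal.subset_span ⟨l, Set.mem_Icc.mpr ⟨h2, hl.2⟩, rfl⟩
  set G : MvPolynomial (Fin n) ℤ →+* MvPolynomial (Fin (n+1)) ℤ ⧸ I :=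
    (Ideal.Quotient.mk I).comp (psiHom n).toRingHom with hG
  have hJG : ∀ a ∈ J, G a = 0 := by
    intro a ha
    refine RingHom.mem_ker.mp (Ideal.span_le.mpr ?_ (hJ ▸ ha))
    rintro _ ⟨l, hl, rfl⟩
    simp only [Set.mem_Icc] at hl
    simp only [SetLike.mem_coe, RingHom.mem_ker, hG, RingHom.comp_apply, AlgHom.toRingHom_eq_coe,
      RingHom.coe_coe]
    rw [← phi_esymm n l hl.1, Ideal.Quotient.eq_zero_iff_mem]
    have h1 : esymm (Fin (n+1)) ℤ l ∈ I :=
      Ideal.subset_span ⟨l, Set.mem_Icc.mpr ⟨by omega, hl.2⟩, rfl⟩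
    have h2 : esymm (Fin (n+1)) ℤ l - psiHom n (phiHom n (esymm (Fin (n+1)) ℤ l)) ∈ I :=
      hspan1 (sub_psi_phi_mem n _)
    have := I.sub_mem h1 h2
    simpa using this
  set Φ := Ideal.Quotient.lift I F hIF with hΦ
  set Ψ := Ideal.Quotient.lift J G hJG with hΨ
  have hΦΨ : ∀ x, Φ (Ψ x) = x := by
    intro x
    obtain ⟨q, rfl⟩ := Ideal.Quotient.mk_surjective x
    rw [hΨ, Ideal.Quotient.lift_mk, hG]
    show Φ ((Ideal.Quotient.mk I) (psiHom n q)) = _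
    rw [hΦ, Ideal.Quotient.lift_mk, hF]
    show (Ideal.Quotient.mk J) (phiHom n (psiHom n q)) = _
    rw [phi_psi]
  have hΨΦ : ∀ x, Ψ (Φ x) = x := by
    intro x
    obtain ⟨p, rfl⟩ := Ideal.Quotient.mk_surjective x
    rw [hΦ, Ideal.Quotient.lift_mk, hF]
    show Ψ ((Ideal.Quotient.mk J) (phiHom n p)) = _
    rw [hΨ, Ideal.Quotient.lift_mk, hG]
    show (Ideal.Quotient.mk I) (psiHom n (phiHom n p)) = _
    rw [Ideal.Quotient.mk_eq_mk_iff_sub_mem]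
    have := hspan1 (sub_psi_phi_mem n p)
    simpa using I.neg_mem this
  exact ⟨{ toFun := Φ, invFun := Ψ, left_inv := hΨΦ, right_inv := hΦΨ,
           map_mul' := Φ.map_mul, map_add' := Φ.map_add }⟩
end

section
/- Let n ≥ 1 and, for 1 ≤ k' ≤ k ≤ n, let Φ(k,k') ∈ ℤ[x_1,…,x_n] be the sum of all monomials of degree k in the variables x_1,…,x_{n−k'+1}. Then (i) for every 1 ≤ k' ≤ k ≤ n, Φ(k,k') lies in the ideal of ℤ[x_1,…,x_n] generated by h_1,…,h_n, and (ii) the ideal generated by h_1,…,h_n equals the ideal generated by Φ(1,1), Φ(2,2), …, Φ(n,n). -/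
open MvPolynomial

/-- `hpoly n a b` is the sum of all monomials of degree `a` in the first `b`
variables `x_1, …, x_b` of `ℤ[x_1,…,x_n]` (each monomial appearing exactly once):
the complete homogeneous symmetric polynomial `h_a^b`.  (Monomials of degree `a`
correspond to size-`a` multisets of variable indices.) -/
noncomputable def hpoly (n a b : ℕ) : MvPolynomial (Fin n) ℤ :=
  ∑ μ ∈ Finset.univ.filter (fun μ : Sym (Fin n) a => ∀ i ∈ μ.1, (i : ℕ) < b),
    (μ.1.map X).prod

lemma hpoly_rec (n k b : ℕ) (hb : b < n) :
    hpoly n (k+1) (b+1)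
      = hpoly n (k+1) b + X (⟨b, hb⟩ : Fin n) * hpoly n k (b+1) := by
  classical
  set e : Fin n := ⟨b, hb⟩
  rw [hpoly]
  rw [← Finset.sum_filter_add_sum_filter_not _ (fun μ : Sym (Fin n) (k+1) => e ∈ μ)]
  have h1 : ∑ μ ∈ (Finset.univ.filter
        (fun μ : Sym (Fin n) (k+1) => ∀ i ∈ μ.1, (i : ℕ) < b+1)).filter
        (fun μ => ¬ e ∈ μ), (μ.1.map X).prod = hpoly n (k+1) b := by
    rw [hpoly, Finset.filter_filter]
    apply Finset.sum_congr _ (fun _ _ => rfl)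
    apply Finset.filter_congr
    intro μ _
    constructor
    · rintro ⟨h, he⟩ i hi
      rcases Nat.lt_succ_iff_lt_or_eq.mp (h i hi) with h' | h'
      · exact h'
      · exact absurd (by apply Sym.mem_coe.mp; rwa [show i = e from Fin.ext h'] at hi) he
    · intro h
      refine ⟨fun i hi => Nat.lt_succ_of_lt (h i hi), fun he => ?_⟩
      exact absurd (h e (Sym.mem_coe.mpr he)) (lt_irrefl b)
  have h2 : ∑ μ ∈ (Finset.univ.filter
        (fun μ : Sym (Fin n) (k+1) => ∀ i ∈ μ.1, (i : ℕ) < b+1)).filter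
        (fun μ => e ∈ μ), (μ.1.map X).prod = X e * hpoly n k (b+1) := by
    rw [hpoly, Finset.mul_sum]
    refine Finset.sum_bij' (fun μ hμ => Sym.erase μ e (Finset.mem_filter.mp hμ).2)
      (fun ν _ => e ::ₛ ν) ?_ ?_ ?_ ?_ ?_
    · intro μ hμ
      simp only [Finset.mem_filter, Finset.mem_univ, true_and] at hμ ⊢
      intro i hi
      exact hμ.1 i (Multiset.mem_of_mem_erase (by simpa [Sym.coe_erase] using hi))
    · intro ν hν
      simp only [Finset.mem_filter, Finset.mem_univ, true_and] at hν ⊢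
      refine ⟨?_, Sym.mem_cons_self e ν⟩
      intro i hi
      rcases Sym.mem_cons.mp (Sym.mem_coe.mp hi) with rfl | hi

      · exact Nat.lt_succ_self b
      · exact hν i (Sym.mem_coe.mpr hi)
    · intro μ hμ
      exact Sym.cons_erase _
    · intro ν hν
      exact Sym.erase_cons_head ν e
    · intro μ hμ
      have := Sym.cons_erase (Finset.mem_filter.mp hμ).2
      conv_lhs => rw [← this]
      simp [Sym.cons]
  rw [h1, h2]; ring

lemma mem_span_down (n : ℕ) : ∀ d k : ℕ, d + 1 ≤ k → k ≤ n →
    hpoly n k (n - d) ∈ Ideal.span ((fun a => hpoly n a n) '' Set.Icc 1 n) := by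
  intro d
  induction d with
  | zero =>
    intro k hk hkn
    exact Ideal.subset_span ⟨k, ⟨hk, hkn⟩, by simp⟩
  | succ d ih =>
    intro k hk hkn
    have hb : n - (d+1) < n := by omega
    obtain ⟨k', rfl⟩ : ∃ k', k = k' + 1 := ⟨k - 1, by omega⟩
    have hrec := hpoly_rec n k' (n - (d+1)) hb
    have heq : n - (d+1) + 1 = n - d := by omega
    rw [heq] at hrec
    have h1 := ih (k'+1) (by omega) (by omega)
    have h2 := ih k' (by omega) (by omega)
    have : hpoly n (k'+1) (n - (d+1))
        = hpoly n (k'+1) (n - d) - X ⟨n - (d+1), hb⟩ * hpoly n k' (n - d) := by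
      rw [hrec]; ring
    rw [this]
    exact sub_mem h1 (Ideal.mul_mem_left _ _ h2)

lemma mem_span_up (n : ℕ) : ∀ k : ℕ, 1 ≤ k → k ≤ n → ∀ b, n - k + 1 ≤ b → b ≤ n →
    hpoly n k b ∈ Ideal.span ((fun k => hpoly n k (n - k + 1)) '' Set.Icc 1 n) := by
  intro k
  induction k using Nat.strong_induction_on with
  | _ k ih =>
    intro hk hkn b hb1
    induction b, hb1 using Nat.le_induction with
    | base =>
      intro _
      exact Ideal.subset_span ⟨k, ⟨hk, hkn⟩, rfl⟩
    | succ b hb ihb =>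
      intro hbn
      have hb' : b < n := by omega
      obtain ⟨k', rfl⟩ : ∃ k'', k = k'' + 1 := ⟨k - 1, by omega⟩
      rw [hpoly_rec n k' b hb']
      refine add_mem (ihb (by omega)) (Ideal.mul_mem_left _ _ ?_)
      exact ih k' (by omega) (by omega) (by omega) (b+1) (by omega) (by omega)

/-- `Φ(k,k')` is the sum of all monomials of degree `k` in the variables
`x_1,…,x_{n−k'+1}`, i.e. `hpoly n k (n−k'+1)`.  For `n ≥ 1`:
(i) for all `1 ≤ k' ≤ k ≤ n`, `Φ(k,k')` lies in the ideal `(h_1,…,h_n)`;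
(ii) `(h_1,…,h_n) = (Φ(1,1),…,Φ(n,n))`. -/
theorem Phi_mem_span_hsymm_and_span_eq (n : ℕ) (hn : 1 ≤ n) :
    (∀ k k' : ℕ, 1 ≤ k' → k' ≤ k → k ≤ n →
      hpoly n k (n - k' + 1) ∈ Ideal.span ((fun a => hpoly n a n) '' Set.Icc 1 n)) ∧
    Ideal.span ((fun a => hpoly n a n) '' Set.Icc 1 n)
      = Ideal.span ((fun k => hpoly n k (n - k + 1)) '' Set.Icc 1 n) := by
  have part1 : ∀ k k' : ℕ, 1 ≤ k' → k' ≤ k → k ≤ n →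
      hpoly n k (n - k' + 1) ∈ Ideal.span ((fun a => hpoly n a n) '' Set.Icc 1 n) := by
    intro k k' h1 h2 h3
    have : n - k' + 1 = n - (k' - 1) := by omega
    rw [this]
    exact mem_span_down n (k' - 1) k (by omega) h3
  refine ⟨part1, le_antisymm ?_ ?_⟩
  · rw [Ideal.span_le]
    rintro x ⟨a, ⟨ha1, ha2⟩, rfl⟩
    exact mem_span_up n a ha1 ha2 n (by omega) le_rfl
  · rw [Ideal.span_le]
    rintro x ⟨k, ⟨hk1, hk2⟩, rfl⟩
    exact part1 k k hk1 le_rfl hk2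
end

section
/- For every integer n ≥ 1, in the polynomial ring ℤ[x_1,…,x_n], the ideal generated by h_1^n, h_2^n, …, h_n^n equals the ideal generated by h_1^n, h_2^{n−1}, …, h_n^{n−1}. -/
open MvPolynomial

lemma hpoly_univ (n a : ℕ) :
    hpoly n a n = ∑ μ : Sym (Fin n) a, (μ.1.map X).prod := by
  unfold hpoly
  rw [Finset.filter_true_of_mem]
  intro μ _ i _
  exact i.is_lt

lemma hpoly_rec_s4 (n a : ℕ) (hn : 1 ≤ n) :
    hpoly n (a+1) n = hpoly n (a+1) (n-1)
      + X (⟨n-1, by omega⟩ : Fin n) * hpoly n a n := by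
  set ln : Fin n := ⟨n-1, by omega⟩ with hln
  rw [hpoly_univ, hpoly_univ]
  rw [← Finset.sum_filter_add_sum_filter_not Finset.univ (fun μ : Sym (Fin n) (a+1) => ln ∈ μ)]
  have h1 : ∑ μ ∈ Finset.univ.filter (fun μ : Sym (Fin n) (a+1) => ¬ ln ∈ μ),
      (μ.1.map X).prod = hpoly n (a+1) (n-1) := by
    unfold hpoly
    apply Finset.sum_congr _ (fun _ _ => rfl)
    apply Finset.filter_congr
    intro μ _
    constructor
    · intro h i hi
      have : i ≠ ln := fun he => h (he ▸ hi)
      have h2 : (i : ℕ) < n := i.is_lt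
      have : (i : ℕ) ≠ n - 1 := fun he => this (Fin.ext he)
      omega
    · intro h hc
      have := h ln hc
      simp [hln] at this
  have h2 : ∑ μ ∈ Finset.univ.filter (fun μ : Sym (Fin n) (a+1) => ln ∈ μ),
      (μ.1.map X).prod = (X ln : MvPolynomial (Fin n) ℤ) * ∑ μ : Sym (Fin n) a, (μ.1.map X).prod := by
    rw [Finset.mul_sum]
    refine Finset.sum_bij' (i := fun (μ : Sym (Fin n) (a+1)) hμ =>
        μ.erase ln (by simpa using hμ))
      (j := fun (μ : Sym (Fin n) a) _ => ln ::ₛ μ)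
      (fun μ hμ => Finset.mem_univ _)
      (fun μ hμ => by simp [Sym.mem_cons])
      (fun μ hμ => Sym.cons_erase _)
      (fun μ hμ => Sym.erase_cons_head _ _)
      (fun μ hμ => ?_)
    have hm : ln ∈ μ := by simpa using hμ
    have hc : μ = ln ::ₛ μ.erase ln hm := (Sym.cons_erase hm).symm
    conv_lhs => rw [hc]
    show (Multiset.map X (ln ::ₘ (μ.erase ln hm : Multiset (Fin n)))).prod = _
    rw [Multiset.map_cons, Multiset.prod_cons]
    rfl
  rw [h1, h2, add_comm]

/-- For every `n ≥ 1`, in `ℤ[x_1,…,x_n]` the ideal `(h_1^n, h_2^n, …, h_n^n)` equals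
the ideal `(h_1^n, h_2^{n−1}, …, h_n^{n−1})`. -/
theorem span_hsymm_eq_span_hsymm_pred (n : ℕ) (hn : 1 ≤ n) :
    Ideal.span ((fun a => hpoly n a n) '' Set.Icc 1 n)
      = Ideal.span ({hpoly n 1 n} ∪ (fun a => hpoly n a (n - 1)) '' Set.Icc 2 n) := by
  set B : Set (MvPolynomial (Fin n) ℤ) :=
    {hpoly n 1 n} ∪ (fun a => hpoly n a (n - 1)) '' Set.Icc 2 n with hB
  apply le_antisymm
  · rw [Ideal.span_le]
    rintro _ ⟨a, ha, rfl⟩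
    simp only [Set.mem_Icc] at ha
    obtain ⟨h1, h2⟩ := ha
    clear hB
    induction a with
    | zero => omega
    | succ k ih =>
      rcases Nat.eq_zero_or_pos k with hk | hk
      · subst hk
        exact Ideal.subset_span (Or.inl rfl)
      · show hpoly n (k+1) n ∈ _
        rw [hpoly_rec_s4 n k hn]
        refine add_mem (Ideal.subset_span (Or.inr ⟨k + 1, ⟨by omega, h2⟩, rfl⟩)) ?_
        exact Ideal.mul_mem_left _ _ (ih (by omega) (by omega))
  · rw [Ideal.span_le]
    rintro p hp
    rcases hp with hp | ⟨a, ha, rfl⟩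
    · rw [Set.mem_singleton_iff] at hp
      subst hp
      exact Ideal.subset_span ⟨1, ⟨le_refl 1, hn⟩, rfl⟩
    · simp only [Set.mem_Icc] at ha
      obtain ⟨h1, h2⟩ := ha
      obtain ⟨k, rfl⟩ : ∃ k, a = k + 1 := ⟨a - 1, by omega⟩
      have hr := hpoly_rec_s4 n k hn
      have : hpoly n (k + 1) (n - 1)
          = hpoly n (k + 1) n - X (⟨n - 1, by omega⟩ : Fin n) * hpoly n k n := by
        rw [hr]; ring
      show hpoly n (k+1) (n-1) ∈ _
      rw [this]
      refine sub_mem (Ideal.subset_span ⟨k + 1, ⟨by omega, h2⟩, rfl⟩) ?_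
      exact Ideal.mul_mem_left _ _ (Ideal.subset_span ⟨k, ⟨by omega, by omega⟩, rfl⟩)
end

section
/- For every integer n ≥ 2 there are ring isomorphisms ℤ[x_1,…,x_n]/(h_1^n,…,h_n^n) ≅ ℤ[x_1,…,x_{n−1}]/(h_2^{n−1},…,h_n^{n−1}) ≅ ℤ[x_1,…,x_{n−1}]/(h_2^{n−1}, h_3^{n−2}, …, h_n^{1}), where the first isomorphism is induced by sending x_n to −x_1−⋯−x_{n−1}. -/
open MvPolynomial

namespace Ideal

variable {R S : Type*} [CommRing R] [CommRing S] {I : Ideal R} {J : Ideal S}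

noncomputable def quotientEquivOfInverseMod (f : R →+* S) (g : S →+* R)
    (hf : I ≤ J.comap f) (hg : J ≤ I.comap g)
    (hgf : (Quotient.mk I).comp (g.comp f) = Quotient.mk I)
    (hfg : (Quotient.mk J).comp (f.comp g) = Quotient.mk J) : R ⧸ I ≃+* S ⧸ J :=
  RingEquiv.ofRingHom (quotientMap J f hf) (quotientMap I g hg)
    (Quotient.ringHom_ext <| RingHom.ext fun q => by simpa using RingHom.congr_fun hfg q)
    (Quotient.ringHom_ext <| RingHom.ext fun p => by simpa using RingHom.congr_fun hgf p)

@[simp]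
theorem quotientEquivOfInverseMod_mk (f : R →+* S) (g : S →+* R) (hf hg hgf hfg) (p : R) :
    quotientEquivOfInverseMod f g hf hg hgf hfg (Quotient.mk I p) = Quotient.mk J (f p) :=
  rfl

end Ideal

theorem hpoly_zero (n b : ℕ) : hpoly n 0 b = 1 := by
  simp [hpoly, Sym.eq_nil_of_card_zero]

theorem hpoly_succ_zero (n a : ℕ) : hpoly n (a + 1) 0 = 0 :=
  Finset.sum_eq_zero fun μ hμ => by
    obtain ⟨i, hi⟩ := μ.exists_mem
    simpa using (Finset.mem_filter.1 hμ).2 i hi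

theorem hpoly_self (n a : ℕ) : hpoly n a n = hsymm (Fin n) ℤ a := by
  simp [hpoly, hsymm]

theorem hpoly_succ_succ (n a b : ℕ) (hb : b < n) :
    hpoly n (a + 1) (b + 1) = hpoly n (a + 1) b + X ⟨b, hb⟩ * hpoly n a (b + 1) := by
  classical
  set c : Fin n := ⟨b, hb⟩
  have avoiding_c : Finset.univ.filter (fun μ : Sym (Fin n) (a + 1) =>
        (∀ i ∈ μ.1, (i : ℕ) < b + 1) ∧ c ∉ μ) =
      Finset.univ.filter (fun μ : Sym (Fin n) (a + 1) => ∀ i ∈ μ.1, (i : ℕ) < b) := by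
    refine Finset.filter_congr fun μ _ => ⟨fun ⟨hμ, hc⟩ i hi => ?_, fun hμ => ⟨?_, ?_⟩⟩
    · refine lt_of_le_of_ne (Nat.lt_succ_iff.1 (hμ i hi)) fun h => hc ?_
      rwa [show i = c from Fin.ext h] at hi
    · exact fun i hi => (hμ i hi).trans b.lt_succ_self
    · exact fun hc => (hμ c hc).false
  have containing_c : ∑ μ ∈ Finset.univ.filter (fun μ : Sym (Fin n) (a + 1) =>
        (∀ i ∈ μ.1, (i : ℕ) < b + 1) ∧ c ∈ μ), (μ.1.map X).prod =
      X c * hpoly n a (b + 1) := by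
    rw [hpoly, Finset.mul_sum]
    symm
    refine Finset.sum_bij (fun ν _ => c ::ₛ ν) (fun ν hν => ?_)
      (fun ν _ ν' _ h => (Sym.cons_inj_right c ν ν').1 h) (fun μ hμ => ?_) (fun ν _ => ?_)
    · simp only [Finset.mem_filter, Finset.mem_univ, true_and] at hν ⊢
      refine ⟨fun i hi => ?_, Sym.mem_cons_self c ν⟩
      rcases Multiset.mem_cons.1 hi with rfl | hi
      exacts [b.lt_succ_self, hν i hi]
    · simp only [Finset.mem_filter, Finset.mem_univ, true_and] at hμ
      refine ⟨μ.erase c hμ.2, ?_, Sym.cons_erase hμ.2⟩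
      exact Finset.mem_filter.2
        ⟨Finset.mem_univ _, fun i hi => hμ.1 i (Multiset.mem_of_mem_erase hi)⟩
    · simp [Sym.cons]
  rw [hpoly, ← Finset.sum_filter_add_sum_filter_not _ (fun μ => c ∈ μ), Finset.filter_filter,
    Finset.filter_filter, add_comm, avoiding_c, containing_c]
  rfl

theorem map_hpoly {n n' : ℕ} (f : MvPolynomial (Fin n) ℤ →+* MvPolynomial (Fin n') ℤ)
    (a : ℕ) {b : ℕ} (hb : b ≤ n) (hb' : b ≤ n')
    (hf : ∀ i (hi : i < b), f (X ⟨i, hi.trans_le hb⟩) = X ⟨i, hi.trans_le hb'⟩) :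
    f (hpoly n a b) = hpoly n' a b := by
  induction a generalizing b with
  | zero => rw [hpoly_zero, hpoly_zero, map_one]
  | succ a iha =>
    induction b with
    | zero => rw [hpoly_succ_zero, hpoly_succ_zero, map_zero]
    | succ b ihb =>
      rw [hpoly_succ_succ n a b hb, hpoly_succ_succ n' a b hb', map_add, map_mul,
        ihb (by omega) (by omega) fun i hi => hf i (by omega), iha hb hb' hf, hf b b.lt_succ_self]

section

variable (m : ℕ)

noncomputable def lastToNegSum : MvPolynomial (Fin (m + 1)) ℤ →+* MvPolynomial (Fin m) ℤ :=
  eval₂Hom C fun i => if h : (i : ℕ) < m then X ⟨i, h⟩ else -∑ j, X j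

theorem lastToNegSum_X_castSucc (i : Fin m) : lastToNegSum m (X i.castSucc) = X i := by
  simp [lastToNegSum]

theorem lastToNegSum_X_last : lastToNegSum m (X (Fin.last m)) = -∑ j, X j := by
  simp [lastToNegSum]

theorem lastToNegSum_hpoly (a : ℕ) : lastToNegSum m (hpoly (m + 1) a m) = hpoly m a m :=
  map_hpoly _ a m.le_succ le_rfl fun i hi => lastToNegSum_X_castSucc m ⟨i, hi⟩

theorem rename_castSucc_hpoly (a : ℕ) :
    rename Fin.castSucc (hpoly m a m) = hpoly (m + 1) a m :=
  map_hpoly (rename Fin.castSucc).toRingHom a le_rfl m.le_succ fun _ _ => rename_X _ _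

theorem lastToNegSum_comp_rename_castSucc :
    (lastToNegSum m).comp (rename Fin.castSucc).toRingHom = RingHom.id _ :=
  ringHom_ext (fun r => by simp [lastToNegSum]) fun i => by simp [lastToNegSum_X_castSucc]

theorem lastToNegSum_hpoly_one : lastToNegSum m (hpoly (m + 1) 1 (m + 1)) = 0 := by
  simp [hpoly_self, hsymm_one, Fin.sum_univ_castSucc, lastToNegSum_X_castSucc,
    lastToNegSum_X_last]

theorem lastToNegSum_hpoly_mem (a : ℕ) (ha : a + 1 ≤ m + 1) :
    lastToNegSum m (hpoly (m + 1) (a + 1) (m + 1)) ∈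
      Ideal.span ((fun a => hpoly m a m) '' Set.Icc 2 (m + 1)) := by
  induction a with
  | zero => rw [lastToNegSum_hpoly_one]; exact zero_mem _
  | succ a ih =>
    rw [hpoly_succ_succ _ _ _ m.lt_succ_self, map_add, map_mul, lastToNegSum_hpoly]
    exact add_mem (Ideal.subset_span ⟨a + 2, ⟨by omega, ha⟩, rfl⟩)
      (Ideal.mul_mem_left _ _ (ih (by omega)))

theorem span_hpoly_le_comap_lastToNegSum :
    Ideal.span ((fun a => hpoly (m + 1) a (m + 1)) '' Set.Icc 1 (m + 1)) ≤
      (Ideal.span ((fun a => hpoly m a m) '' Set.Icc 2 (m + 1))).comap (lastToNegSum m) :=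
  Ideal.span_le.2 <| Set.image_subset_iff.2 fun a ⟨ha₁, ha₂⟩ => by
    obtain ⟨a, rfl⟩ : ∃ b, a = b + 1 := ⟨a - 1, by omega⟩
    exact lastToNegSum_hpoly_mem m a ha₂

theorem rename_castSucc_hpoly_mem (a : ℕ) (ha : a ∈ Set.Icc 2 (m + 1)) :
    rename Fin.castSucc (hpoly m a m) ∈
      Ideal.span ((fun a => hpoly (m + 1) a (m + 1)) '' Set.Icc 1 (m + 1)) := by
  obtain ⟨ha₁, ha₂⟩ := ha
  obtain ⟨a, rfl⟩ : ∃ b, a = b + 1 := ⟨a - 1, by omega⟩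
  rw [rename_castSucc_hpoly, eq_sub_of_add_eq (hpoly_succ_succ _ _ _ m.lt_succ_self).symm]
  exact sub_mem (Ideal.subset_span ⟨a + 1, ⟨by omega, ha₂⟩, rfl⟩)
    (Ideal.mul_mem_left _ _ (Ideal.subset_span ⟨a, ⟨by omega, by omega⟩, rfl⟩))

theorem span_hpoly_le_comap_rename_castSucc :
    Ideal.span ((fun a => hpoly m a m) '' Set.Icc 2 (m + 1)) ≤
      (Ideal.span ((fun a => hpoly (m + 1) a (m + 1)) '' Set.Icc 1 (m + 1))).comap
        (rename Fin.castSucc).toRingHom :=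
  Ideal.span_le.2 <| Set.image_subset_iff.2 <| rename_castSucc_hpoly_mem m

theorem mk_comp_rename_castSucc_comp_lastToNegSum :
    (Ideal.Quotient.mk (Ideal.span ((fun a => hpoly (m + 1) a (m + 1)) '' Set.Icc 1 (m + 1)))).comp
      ((rename Fin.castSucc).toRingHom.comp (lastToNegSum m)) = Ideal.Quotient.mk _ := by
  refine ringHom_ext (fun r => by simp [lastToNegSum]) fun i => ?_
  cases i using Fin.lastCases with
  | cast i => simp [lastToNegSum_X_castSucc]
  | last =>
    have h_one_mem : hpoly (m + 1) 1 (m + 1) ∈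
        Ideal.span ((fun a => hpoly (m + 1) a (m + 1)) '' Set.Icc 1 (m + 1)) :=
      Ideal.subset_span ⟨1, ⟨le_rfl, by omega⟩, rfl⟩
    simp only [RingHom.comp_apply, lastToNegSum_X_last, Ideal.Quotient.mk_eq_mk_iff_sub_mem]
    convert neg_mem h_one_mem using 1
    simp [hpoly_self, hsymm_one, Fin.sum_univ_castSucc]
    ring

theorem hpoly_mem_span_antidiagonal (a b : ℕ) (ha : 2 ≤ a) (hab : m + 2 ≤ a + b) (hb : b ≤ m) :
    hpoly m a b ∈ Ideal.span ((fun a => hpoly m a (m + 1 - a + 1)) '' Set.Icc 2 (m + 1)) := by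
  induction a generalizing b with
  | zero => omega
  | succ a iha =>
    induction b with
    | zero => rw [hpoly_succ_zero]; exact zero_mem _
    | succ b ihb =>
      by_cases h : a + 1 + (b + 1) = m + 2
      · exact Ideal.subset_span ⟨a + 1, ⟨ha, by omega⟩, congrArg (hpoly m (a + 1)) (by omega)⟩
      · rw [hpoly_succ_succ m a b (by omega)]
        exact add_mem (ihb (by omega) (by omega))
          (Ideal.mul_mem_left _ _ (iha (b + 1) (by omega) (by omega) hb))

theorem hpoly_mem_span_hpoly_self (a b : ℕ) (ha : 2 ≤ a) (ha' : a ≤ m + 1)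
    (hab : m + 2 ≤ a + b) (hb : b ≤ m) :
    hpoly m a b ∈ Ideal.span ((fun a => hpoly m a m) '' Set.Icc 2 (m + 1)) := by
  induction a generalizing b with
  | zero => omega
  | succ a iha =>
    induction hb using Nat.decreasingInduction with
    | self => exact Ideal.subset_span ⟨a + 1, ⟨ha, ha'⟩, rfl⟩
    | of_succ b hb ihb =>
      rw [eq_sub_of_add_eq (hpoly_succ_succ m a b hb).symm]
      exact sub_mem (ihb (by omega))
        (Ideal.mul_mem_left _ _ (iha (b + 1) (by omega) (by omega) (by omega) hb))

theorem span_hpoly_self_eq_span_antidiagonal :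
    Ideal.span ((fun a => hpoly m a m) '' Set.Icc 2 (m + 1)) =
      Ideal.span ((fun a => hpoly m a (m + 1 - a + 1)) '' Set.Icc 2 (m + 1)) :=
  le_antisymm
    (Ideal.span_le.2 <| Set.image_subset_iff.2 fun a ⟨ha₁, _⟩ =>
      hpoly_mem_span_antidiagonal m a m ha₁ (by omega) le_rfl)
    (Ideal.span_le.2 <| Set.image_subset_iff.2 fun a ⟨ha₁, ha₂⟩ =>
      hpoly_mem_span_hpoly_self m a _ ha₁ ha₂ (by omega) (by omega))

end

/-- For `n ≥ 2` there are ring isomorphisms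
`ℤ[x_1,…,x_n]/(h_1^n,…,h_n^n) ≅ ℤ[x_1,…,x_{n−1}]/(h_2^{n−1},…,h_n^{n−1})
  ≅ ℤ[x_1,…,x_{n−1}]/(h_2^{n−1}, h_3^{n−2}, …, h_n^1)`,
the first induced by `x_n ↦ −x_1−⋯−x_{n−1}`. -/
theorem quotient_hsymm_iso_chain (n : ℕ) (hn : 2 ≤ n) :
    (∃ f : (MvPolynomial (Fin n) ℤ ⧸
              Ideal.span ((fun a => hpoly n a n) '' Set.Icc 1 n)) ≃+*
           (MvPolynomial (Fin (n - 1)) ℤ ⧸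
              Ideal.span ((fun a => hpoly (n - 1) a (n - 1)) '' Set.Icc 2 n)),
      ∀ p : MvPolynomial (Fin n) ℤ,
        f (Ideal.Quotient.mk _ p)
          = Ideal.Quotient.mk _
              (eval₂ C
                (fun i : Fin n =>
                  if h : (i : ℕ) < n - 1 then X (⟨i, h⟩ : Fin (n - 1))
                  else - ∑ j : Fin (n - 1), X j) p)) ∧
    Nonempty
      ((MvPolynomial (Fin (n - 1)) ℤ ⧸
          Ideal.span ((fun a => hpoly (n - 1) a (n - 1)) '' Set.Icc 2 n))
        ≃+*
       (MvPolynomial (Fin (n - 1)) ℤ ⧸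
          Ideal.span ((fun a => hpoly (n - 1) a (n - a + 1)) '' Set.Icc 2 n))) := by
  obtain ⟨m, rfl⟩ : ∃ m, n = m + 1 := ⟨n - 1, by omega⟩
  exact ⟨⟨Ideal.quotientEquivOfInverseMod (lastToNegSum m) _
      (span_hpoly_le_comap_lastToNegSum m) (span_hpoly_le_comap_rename_castSucc m)
      (mk_comp_rename_castSucc_comp_lastToNegSum m)
      (by rw [lastToNegSum_comp_rename_castSucc]; exact RingHom.comp_id _),
      Ideal.quotientEquivOfInverseMod_mk _ _ _ _ _ _⟩,
    ⟨Ideal.quotientEquivAlgOfEq ℤ (span_hpoly_self_eq_span_antidiagonal m) |>.toRingEquiv⟩⟩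
end

section
/- For every integer n ≥ 1 and every integer k with 0 ≤ k ≤ n(n+1)/2, T(n,k) = ((n,k)) + ∑_{a=1}^{n} (−1)^a · ∑ ((n, k − (i_1+⋯+i_a))), where the inner sum runs over all subsets {i_1 < ⋯ < i_a} of {2,…,n+1} with i_1+⋯+i_a ≤ k (equivalently over all such subsets, since ((n,j)) = 0 for j < 0). -/
/-- The Mahonian number `T(n,k)`: the number of tuples `(a_1,…,a_n)` of nonnegative
integers with `a_i ≤ i` for each `1 ≤ i ≤ n` and `a_1 + ⋯ + a_n = k`. -/
def mahonian (n k : ℕ) : ℕ :=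
  (Finset.univ.filter
    (fun a : (i : Fin n) → Fin ((i : ℕ) + 2) => ∑ i, ((a i : ℕ)) = k)).card

/-- The multiset coefficient `((n, j))`, extended to integer arguments:
`((n, j)) = C(n + j - 1, j)` for `j ≥ 0`, and `0` for `j < 0`. -/
def multisetCoeff (n : ℕ) (j : ℤ) : ℤ :=
  if j < 0 then 0 else ((n + j.toNat - 1).choose j.toNat : ℤ)

/-!
The Mahonian generating function is
`∏_{i=1}^{n} (1 + q + ⋯ + q^i) = ∏_{m=2}^{n+1} (1 - q^m) / (1 - q)^n`.
Expanding the numerator over subsets `S ⊆ {2,…,n+1}` gives `∑_S (-1)^|S| q^{ΣS}`, and the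
coefficient of `q^j` in `1 / (1 - q)^n` is `((n, j))`; comparing coefficients of `q^k` gives
the formula.
-/

open PowerSeries Finset

theorem card_filter_sum_eq_coeff_prod_geomSum {R : Type*} [CommSemiring R] {ι : Type*}
    [Fintype ι] [DecidableEq ι] (b : ι → ℕ) (k : ℕ) :
    (#{a : (i : ι) → Fin (b i) | ∑ i, (a i : ℕ) = k} : R)
      = coeff k (∏ i, ∑ j ∈ range (b i), (X : R⟦X⟧) ^ j) := by
  simp_rw [← Fin.sum_univ_eq_sum_range, prod_univ_sum, Fintype.piFinset_univ,
    prod_pow_eq_pow_sum, map_sum, coeff_X_pow, card_filter, Nat.cast_sum]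
  exact sum_congr rfl fun a _ => by simp [eq_comm]

theorem mahonian_eq_coeff (n k : ℕ) :
    (mahonian n k : ℤ) = coeff k (∏ i : Fin n, ∑ j ∈ range (i + 2), (X : ℤ⟦X⟧) ^ j) :=
  card_filter_sum_eq_coeff_prod_geomSum (fun i : Fin n => (i : ℕ) + 2) k

theorem coeff_invOneSubPow (n j : ℕ) :
    coeff j (invOneSubPow ℤ n).val = multisetCoeff n j := by
  cases n with
  -- `((0, j)) = [j = 0]` only because `0 + j - 1` truncates to `0` at `j = 0`.
  | zero => cases j <;> simp [invOneSubPow_zero, coeff_one, multisetCoeff]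
  | succ n =>
    rw [invOneSubPow_val_succ_eq_mk_add_choose, coeff_mk, multisetCoeff, if_neg (by omega)]
    simp [Nat.choose_symm_add, add_right_comm n 1 j]

theorem coeff_X_pow_mul_invOneSubPow (n m k : ℕ) :
    coeff k ((X : ℤ⟦X⟧) ^ m * (invOneSubPow ℤ n).val) = multisetCoeff n ((k : ℤ) - m) := by
  rw [coeff_X_pow_mul']
  split_ifs with hm
  · rw [coeff_invOneSubPow, Nat.cast_sub hm]
  · rw [multisetCoeff, if_pos (by omega)]

theorem prod_one_sub_X_pow_eq_sum_powerset {R : Type*} [CommRing R] (s : Finset ℕ) :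
    ∏ m ∈ s, (1 - (X : R⟦X⟧) ^ m) = ∑ S ∈ s.powerset, (-1 : R⟦X⟧) ^ #S * X ^ (∑ m ∈ S, m) := by
  simp_rw [sub_eq_add_neg, prod_one_add]
  exact sum_congr rfl fun S _ => by rw [prod_neg, prod_pow_eq_pow_sum]

theorem prod_geomSum_mul_one_sub_pow {R : Type*} [CommRing R] (n : ℕ) :
    (∏ i : Fin n, ∑ j ∈ range (i + 2), (X : R⟦X⟧) ^ j) * (1 - X) ^ n
      = ∏ m ∈ Icc 2 (n + 1), (1 - X ^ m) := by
  rw [← card_fin n, ← prod_const, card_fin, ← prod_mul_distrib]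
  simp_rw [geom_sum_mul_neg]
  rw [Fin.prod_univ_eq_prod_range (fun i => 1 - (X : R⟦X⟧) ^ (i + 2)),
    ← Ico_add_one_right_eq_Icc, prod_Ico_eq_prod_range]
  simp_rw [add_comm 2]
  rfl

theorem prod_geomSum_eq_mul_invOneSubPow {R : Type*} [CommRing R] (n : ℕ) :
    ∏ i : Fin n, ∑ j ∈ range (i + 2), (X : R⟦X⟧) ^ j
      = (∏ m ∈ Icc 2 (n + 1), (1 - X ^ m)) * (invOneSubPow R n).val := by
  rw [← prod_geomSum_mul_one_sub_pow, ← invOneSubPow_inv_eq_one_sub_pow, mul_assoc,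
    Units.inv_val, mul_one]

theorem sum_powerset_neg_one_pow_card_mul {α R : Type*} [CommRing R] (s : Finset α)
    (f : Finset α → R) :
    ∑ S ∈ s.powerset, (-1) ^ #S * f S
      = ∑ a ∈ range (#s + 1), (-1) ^ a * ∑ S ∈ s.powersetCard a, f S := by
  rw [sum_powerset]
  refine sum_congr rfl fun a _ => ?_
  rw [mul_sum]
  exact sum_congr rfl fun S hS => by rw [(mem_powersetCard.mp hS).2]

theorem coeff_prod_one_sub_X_pow_mul_invOneSubPow (s : Finset ℕ) (n k : ℕ) :
    coeff k ((∏ m ∈ s, (1 - (X : ℤ⟦X⟧) ^ m)) * (invOneSubPow ℤ n).val)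
      = ∑ S ∈ s.powerset, (-1) ^ #S * multisetCoeff n ((k : ℤ) - ∑ m ∈ S, (m : ℤ)) := by
  rw [prod_one_sub_X_pow_eq_sum_powerset, sum_mul, map_sum]
  refine sum_congr rfl fun S _ => ?_
  rw [mul_assoc, ← map_one (C (R := ℤ)), ← map_neg, ← map_pow, coeff_C_mul,
    coeff_X_pow_mul_invOneSubPow, Nat.cast_sum]

theorem mahonian_eq_alternating_multisetCoeff_general (n k : ℕ) :
    (mahonian n k : ℤ)
      = multisetCoeff n (k : ℤ)
        + ∑ a ∈ Finset.Icc 1 n, (-1 : ℤ) ^ a *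
            ∑ S ∈ (Finset.Icc 2 (n + 1)).powersetCard a,
              multisetCoeff n ((k : ℤ) - ∑ i ∈ S, (i : ℤ)) := by
  have hcard : #(Icc 2 (n + 1)) = n := by simp
  rw [mahonian_eq_coeff, prod_geomSum_eq_mul_invOneSubPow,
    coeff_prod_one_sub_X_pow_mul_invOneSubPow, sum_powerset_neg_one_pow_card_mul, hcard,
    sum_range_eq_add_Ico _ (by positivity), Ico_add_one_right_eq_Icc]
  simp

/-- For `n ≥ 1` and `0 ≤ k ≤ n(n+1)/2`,
`T(n,k) = ((n,k)) + ∑_{a=1}^{n} (−1)^a ∑_{ {i_1<⋯<i_a} ⊆ {2,…,n+1} } ((n, k−(i_1+⋯+i_a)))`,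
the inner sum over all size-`a` subsets of `{2,…,n+1}` (terms with
`i_1+⋯+i_a > k` vanish since `((n,j)) = 0` for `j < 0`). -/
theorem mahonian_eq_alternating_multisetCoeff (n k : ℕ) (hn : 1 ≤ n)
    (hk : k ≤ n * (n + 1) / 2) :
    (mahonian n k : ℤ)
      = multisetCoeff n (k : ℤ)
        + ∑ a ∈ Finset.Icc 1 n, (-1 : ℤ) ^ a *
            ∑ S ∈ (Finset.Icc 2 (n + 1)).powersetCard a,
              multisetCoeff n ((k : ℤ) - ∑ i ∈ S, (i : ℤ)) :=
  mahonian_eq_alternating_multisetCoeff_general n k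
end

section
/- Let n ≥ 1 and work in ℤ[γ_1,…,γ_{n+1}] modulo the ideal I generated by the elementary symmetric polynomials σ_1,…,σ_{n+1} in γ_1,…,γ_{n+1}. Let γ̂_∅ = ∏_{t=1}^{n} γ_t^{n−t+1} and, for 1 ≤ i ≤ n, let γ̂_i = γ̂_∅/γ_i (the monomial γ̂_∅ with the exponent of γ_i decreased by one). Then for all 1 ≤ i, j ≤ n: γ̂_i·γ_j ∈ I if j < i or j ≥ i+2; γ̂_i·γ_j − γ̂_∅ ∈ I if j = i; and γ̂_i·γ_j + γ̂_∅ ∈ I if j = i+1. -/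
open MvPolynomial

/-- The ideal of `ℤ[γ_1,…,γ_{n+1}]` generated by the elementary symmetric polynomials
`σ_1,…,σ_{n+1}`. -/
noncomputable def symIdeal (n : ℕ) : Ideal (MvPolynomial (Fin (n + 1)) ℤ) :=
  Ideal.span ((fun l => esymm (Fin (n + 1)) ℤ l) '' Set.Icc 1 (n + 1))

/-- `γ̂_∅ = ∏_{t=1}^{n} γ_t^{n−t+1}` (in `0`-indexed form, exponent `n − t`). -/
noncomputable def gammaHatEmpty (n : ℕ) : MvPolynomial (Fin (n + 1)) ℤ :=
  ∏ t : Fin n, X (Fin.castLE (Nat.le_succ n) t) ^ (n - (t : ℕ))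

/-- `γ̂_i = γ̂_∅ / γ_i`: the monomial `γ̂_∅` with the exponent of `γ_i` decreased by one. -/
noncomputable def gammaHat (n : ℕ) (i : Fin n) : MvPolynomial (Fin (n + 1)) ℤ :=
  ∏ t : Fin n, X (Fin.castLE (Nat.le_succ n) t) ^
    (if t = i then n - (t : ℕ) - 1 else n - (t : ℕ))


/-!
Modulo `σ_1, …, σ_{n+1}` we have `∏_t (1 - γ_t X) = 1`, so the generating series
`∏_{t<m} (1 - γ_t X)⁻¹` of the complete homogeneous polynomials `h_k(γ_0, …, γ_{m-1})` is the
polynomial `∏_{m ≤ t ≤ n} (1 - γ_t X)`: `h_k(γ_0, …, γ_{m-1}) = 0` for `k > n + 1 - m`.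
The relation `h_{n+1-m}(γ_0, …, γ_m) = 0` trades the power `γ_m^{n+1-m}` for degree in
`γ_0, …, γ_{m-1}`, and induction on `m` shows that every product of more than `∑_{t<m} (n - t)`
of the variables `γ_0, …, γ_{m-1}` vanishes.

The product `γ̂_i γ_s` is then computed by strong induction on `s`. For `s < i` the part of the
monomial in `γ_0, …, γ_s` has too high degree, and for `s = i` the product is `γ̂_∅`. For `s > i`
the relation for `γ_s^{n+1-s}` gives `γ̂_i γ_s = -∑_{r<s} γ̂_i γ_r`, and by the induction
hypothesis this sum telescopes to `γ̂_∅` if `s = i + 1` and to `0` otherwise.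
-/

open Finset

section CompleteHomogeneous

variable {Q : Type*} [CommRing Q] (y : ℕ → Q)

/-- `completeHom y m k` is `h_k(y_0, …, y_{m-1})`. -/
def completeHom : ℕ → ℕ → Q
  | _, 0 => 1
  | 0, _ + 1 => 0
  | m + 1, k + 1 => completeHom m (k + 1) + y m * completeHom (m + 1) k
termination_by m k => (m, k)

@[simp] theorem completeHom_zero (m : ℕ) : completeHom y m 0 = 1 := by
  cases m <;> simp [completeHom]

@[simp] theorem completeHom_zero_succ (k : ℕ) : completeHom y 0 (k + 1) = 0 := by
  simp [completeHom]

theorem completeHom_succ_succ (m k : ℕ) :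
    completeHom y (m + 1) (k + 1) = completeHom y m (k + 1) + y m * completeHom y (m + 1) k := by
  simp [completeHom]

theorem completeHom_one (m : ℕ) : completeHom y m 1 = ∑ t ∈ range m, y t := by
  induction m with
  | zero => simp
  | succ m ih => rw [completeHom_succ_succ, ih, sum_range_succ, completeHom_zero, mul_one]

theorem completeHom_succ (m k : ℕ) :
    completeHom y (m + 1) k = ∑ d ∈ range (k + 1), y m ^ d * completeHom y m (k - d) := by
  induction k with
  | zero => simp
  | succ k ih =>
    rw [completeHom_succ_succ, ih, sum_range_succ' _ (k + 1), mul_sum]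
    simp only [pow_succ', mul_assoc, Nat.add_sub_add_right, pow_zero, one_mul, Nat.sub_zero]
    exact add_comm _ _

theorem one_sub_C_mul_X_mul_completeHom (m : ℕ) :
    (1 - PowerSeries.C (y m) * PowerSeries.X) * PowerSeries.mk (completeHom y (m + 1)) =
      PowerSeries.mk (completeHom y m) := by
  ext (_ | k)
  · simp
  · simp [sub_mul, mul_assoc, completeHom_succ_succ]

theorem prod_one_sub_C_mul_X_mul_completeHom (m : ℕ) :
    (∏ t ∈ range m, (1 - PowerSeries.C (y t) * PowerSeries.X)) *
      PowerSeries.mk (completeHom y m) = 1 := by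
  induction m with
  | zero => ext (_ | k) <;> simp
  | succ m ih => rw [prod_range_succ, mul_assoc, one_sub_C_mul_X_mul_completeHom, ih]

theorem prod_one_sub_C_mul_X {ι : Type*} (s : Finset ι) (a : ι → Q) :
    ∏ i ∈ s, (1 - PowerSeries.C (a i) * PowerSeries.X) =
      ∑ j ∈ range (#s + 1),
        PowerSeries.C ((-1) ^ j * ∑ T ∈ powersetCard j s, ∏ i ∈ T, a i) * PowerSeries.X ^ j := by
  simp_rw [sub_eq_add_neg, prod_one_add, sum_powerset, mul_sum, map_sum, sum_mul]
  refine sum_congr rfl fun j _ => sum_congr rfl fun T hT => ?_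
  rw [(mem_powersetCard.1 hT).2.symm, prod_neg, prod_mul_distrib, prod_const, map_mul, map_pow,
    map_neg, map_one, map_prod, mul_assoc]

theorem coeff_prod_one_sub_C_mul_X_eq_zero {ι : Type*} (s : Finset ι) (a : ι → Q) {k : ℕ}
    (hk : #s < k) :
    PowerSeries.coeff k (∏ i ∈ s, (1 - PowerSeries.C (a i) * PowerSeries.X)) = 0 := by
  rw [prod_one_sub_C_mul_X, map_sum]
  exact sum_eq_zero fun j hj => by
    rw [PowerSeries.coeff_C_mul_X_pow, if_neg (by rw [mem_range] at hj; omega)]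

theorem completeHom_eq_zero {N : ℕ}
    (hy : ∏ t ∈ range N, (1 - PowerSeries.C (y t) * PowerSeries.X) = 1) {m k : ℕ}
    (hm : m ≤ N) (hk : N < m + k) : completeHom y m k = 0 := by
  have hsplit := prod_range_mul_prod_Ico (fun t => 1 - PowerSeries.C (y t) * PowerSeries.X) hm
  have hseries : PowerSeries.mk (completeHom y m) =
      ∏ t ∈ Ico m N, (1 - PowerSeries.C (y t) * PowerSeries.X) := by
    calc PowerSeries.mk (completeHom y m)
        _ = (∏ t ∈ range N, (1 - PowerSeries.C (y t) * PowerSeries.X)) *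
              PowerSeries.mk (completeHom y m) := by
          rw [hy, one_mul]
        _ = _ := by
          rw [← hsplit, mul_right_comm, prod_one_sub_C_mul_X_mul_completeHom, one_mul]
  rw [← PowerSeries.coeff_mk k (completeHom y m), hseries]
  exact coeff_prod_one_sub_C_mul_X_eq_zero _ _ (by simp; omega)

end CompleteHomogeneous

section Staircase

variable {Q : Type*} [CommRing Q] (y : ℕ → Q) (n : ℕ)

def prefixSpan (m : ℕ) : Submodule ℤ Q := Submodule.span ℤ (y '' ↑(range m))

def topDegree (m : ℕ) : ℕ := ∑ t ∈ range m, (n - t)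

def staircase (m : ℕ) : Q := ∏ t ∈ range m, y t ^ (n - t)

def staircaseDiv (i m : ℕ) : Q := ∏ t ∈ range m, y t ^ (if t = i then n - t - 1 else n - t)

theorem mem_prefixSpan {t m : ℕ} (ht : t < m) : y t ∈ prefixSpan y m :=
  Submodule.subset_span ⟨t, by simpa using ht, rfl⟩

theorem prefixSpan_mono {m m' : ℕ} (h : m ≤ m') : prefixSpan y m ≤ prefixSpan y m' :=
  Submodule.span_mono (Set.image_mono (by simpa using h))

theorem prefixSpan_succ (m : ℕ) : prefixSpan y (m + 1) = ℤ ∙ y m ⊔ prefixSpan y m := by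
  rw [prefixSpan, range_add_one, coe_insert, Set.image_insert_eq, Submodule.span_insert,
    prefixSpan]

theorem completeHom_mem_prefixSpan_pow (m k : ℕ) : completeHom y m k ∈ prefixSpan y m ^ k := by
  induction m, k using completeHom.induct with
  | case1 m =>
    rw [completeHom_zero, pow_zero]
    exact Submodule.one_le.mp le_rfl
  | case2 k => simp
  | case3 m k ih₁ ih₂ =>
    rw [completeHom_succ_succ]
    refine Submodule.add_mem _ (pow_le_pow_left' (prefixSpan_mono y m.le_succ) _ ih₁) ?_
    rw [pow_succ']
    exact Submodule.mul_mem_mul (mem_prefixSpan y m.lt_succ_self) ih₂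

theorem prod_pow_mem_prefixSpan_pow (a : ℕ → ℕ) (m : ℕ) :
    ∏ t ∈ range m, y t ^ a t ∈ prefixSpan y m ^ ∑ t ∈ range m, a t := by
  induction m with
  | zero =>
    rw [prod_range_zero, sum_range_zero, pow_zero]
    exact Submodule.one_le.mp le_rfl
  | succ m ih =>
    rw [prod_range_succ, sum_range_succ, pow_add]
    exact Submodule.mul_mem_mul (pow_le_pow_left' (prefixSpan_mono y m.le_succ) _ ih)
      (Submodule.pow_mem_pow _ (mem_prefixSpan y m.lt_succ_self) _)

theorem pow_mul_eq_zero_of_topDegree_lt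
    (hy : ∏ t ∈ range (n + 1), (1 - PowerSeries.C (y t) * PowerSeries.X) = 1)
    {m : ℕ} (hm : m ≤ n) (ih : ∀ a, topDegree n m < a → prefixSpan y m ^ a = ⊥)
    {c a : ℕ} (hca : topDegree n (m + 1) < c + a) {v : Q} (hv : v ∈ prefixSpan y m ^ a) :
    y m ^ c * v = 0 := by
  induction c using Nat.strong_induction_on generalizing a v with
  | _ c IH =>
  by_cases ha : topDegree n m < a
  · rw [ih a ha, Submodule.mem_bot] at hv
    rw [hv, mul_zero]
  have hT : topDegree n (m + 1) = topDegree n m + (n - m) := sum_range_succ _ _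
  obtain ⟨c, rfl⟩ : ∃ c', c = c' + (n + 1 - m) := ⟨c - (n + 1 - m), by omega⟩
  have hrel := completeHom_eq_zero y hy (m := m + 1) (k := n + 1 - m) (by omega) (by omega)
  rw [completeHom_succ, sum_range_succ, Nat.sub_self, completeHom_zero, mul_one] at hrel
  calc y m ^ (c + (n + 1 - m)) * v
      = -∑ d ∈ range (n + 1 - m), y m ^ (c + d) * (completeHom y m (n + 1 - m - d) * v) := by
        have hsum :
            ∑ d ∈ range (n + 1 - m), y m ^ (c + d) * (completeHom y m (n + 1 - m - d) * v) =
              y m ^ c * v * ∑ d ∈ range (n + 1 - m), y m ^ d * completeHom y m (n + 1 - m - d) := by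
          rw [mul_sum]
          exact sum_congr rfl fun d _ => by ring
        linear_combination (y m ^ c * v) * hrel + hsum
    _ = 0 := by
      refine neg_eq_zero.2 (sum_eq_zero fun d hd => IH _ ?_ (a := a + (n + 1 - m - d)) ?_ ?_)
      · simp at hd; omega
      · simp at hd; omega
      · rw [add_comm a, pow_add]
        exact Submodule.mul_mem_mul (completeHom_mem_prefixSpan_pow y m _) hv

theorem prefixSpan_pow_eq_bot
    (hy : ∏ t ∈ range (n + 1), (1 - PowerSeries.C (y t) * PowerSeries.X) = 1) {m d : ℕ}
    (hm : m ≤ n + 1) (hd : topDegree n m < d) : prefixSpan y m ^ d = ⊥ := by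
  induction m generalizing d with
  | zero =>
    rw [prefixSpan, range_zero, coe_empty, Set.image_empty, Submodule.span_empty,
      ← Submodule.zero_eq_bot, zero_pow (by simp [topDegree] at hd; omega)]
  | succ m ih =>
    rw [prefixSpan_succ, ← Submodule.add_eq_sup, add_pow, ← Submodule.zero_eq_bot]
    refine sum_eq_zero fun c hc => ?_
    suffices h : (ℤ ∙ y m) ^ c * prefixSpan y m ^ (d - c) = ⊥ by
      rw [h, ← Submodule.zero_eq_bot, zero_mul]
    rw [eq_bot_iff, Submodule.mul_le]
    intro w hw v hv
    rw [Submodule.span_pow, Set.singleton_pow, Submodule.mem_span_singleton] at hw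
    obtain ⟨r, rfl⟩ := hw
    rw [smul_mul_assoc, pow_mul_eq_zero_of_topDegree_lt y n hy (by omega)
      (fun a ha => ih (by omega) ha) (by simp at hc; omega) hv, smul_zero]
    exact Submodule.zero_mem _

theorem mul_eq_zero_of_topDegree_lt
    (hy : ∏ t ∈ range (n + 1), (1 - PowerSeries.C (y t) * PowerSeries.X) = 1)
    {m a b : ℕ} {u v : Q} (hm : m ≤ n + 1) (hu : u ∈ prefixSpan y m ^ a)
    (hv : v ∈ prefixSpan y m ^ b) (hab : topDegree n m < a + b) : u * v = 0 := by
  have huv := Submodule.mul_mem_mul hu hv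
  rwa [← pow_add, prefixSpan_pow_eq_bot y n hy hm hab, Submodule.mem_bot] at huv

theorem staircase_succ_mul_eq_zero
    (hy : ∏ t ∈ range (n + 1), (1 - PowerSeries.C (y t) * PowerSeries.X) = 1)
    {s : ℕ} (hs : s ≤ n) : staircase y n (s + 1) * y s = 0 :=
  mul_eq_zero_of_topDegree_lt y n hy (by omega) (prod_pow_mem_prefixSpan_pow y _ _)
    (by rw [pow_one]; exact mem_prefixSpan y s.lt_succ_self) (Nat.lt_succ_self _)

theorem staircase_eq_mul {s m : ℕ} (hsm : s < m) :
    staircase y n m = staircase y n s * y s ^ (n - s) * ∏ t ∈ Ico (s + 1) m, y t ^ (n - t) := by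
  rw [staircase, staircase, ← prod_range_succ (fun t => y t ^ (n - t)),
    prod_range_mul_prod_Ico _ hsm]

theorem staircaseDiv_eq_mul {i s m : ℕ} (his : i < s) (hsm : s < m) :
    staircaseDiv y n i m =
      staircaseDiv y n i s * y s ^ (n - s) * ∏ t ∈ Ico (s + 1) m, y t ^ (n - t) := by
  rw [staircaseDiv, staircaseDiv, ← prod_range_mul_prod_Ico _ hsm, prod_range_succ,
    if_neg his.ne']
  congr 1
  refine prod_congr rfl fun t ht => ?_
  rw [if_neg (by simp at ht; omega)]

theorem staircaseDiv_eq_staircase {i m : ℕ} (hmi : m ≤ i) :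
    staircaseDiv y n i m = staircase y n m :=
  prod_congr rfl fun t ht => by rw [if_neg (by simp at ht; omega)]

theorem staircaseDiv_mul_self {i m : ℕ} (him : i < m) (hin : i < n) :
    staircaseDiv y n i m * y i = staircase y n m := by
  rw [staircaseDiv, staircase, ← mul_prod_erase _ _ (mem_range.2 him),
    ← mul_prod_erase _ (fun t => y t ^ (n - t)) (mem_range.2 him), if_pos rfl, mul_right_comm,
    ← pow_succ, Nat.sub_add_cancel (by omega)]
  congr 1
  exact prod_congr rfl fun t ht => by rw [if_neg (ne_of_mem_erase ht)]

theorem sum_staircaseDiv_exponent {i m : ℕ} (him : i < m) (hin : i < n) :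
    (∑ t ∈ range m, if t = i then n - t - 1 else n - t) + 1 = topDegree n m := by
  have herase : ∑ t ∈ (range m).erase i, (if t = i then n - t - 1 else n - t) =
      ∑ t ∈ (range m).erase i, (n - t) :=
    sum_congr rfl fun t ht => by rw [if_neg (ne_of_mem_erase ht)]
  rw [topDegree, ← add_sum_erase _ _ (mem_range.2 him),
    ← add_sum_erase _ (fun t => n - t) (mem_range.2 him), if_pos rfl, herase]
  omega

theorem staircaseDiv_mul_pow
    (hy : ∏ t ∈ range (n + 1), (1 - PowerSeries.C (y t) * PowerSeries.X) = 1) {i s : ℕ}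
    (his : i < s) (hsn : s ≤ n) :
    staircaseDiv y n i s * y s ^ (n - s + 1) =
      -(staircaseDiv y n i s * ∑ r ∈ range s, y r) * y s ^ (n - s) := by
  have hdeg := sum_staircaseDiv_exponent n his (by omega)
  have hmem : staircaseDiv y n i s ∈
      prefixSpan y s ^ ∑ t ∈ range s, (if t = i then n - t - 1 else n - t) :=
    prod_pow_mem_prefixSpan_pow y _ s
  have hlow : staircaseDiv y n i s *
      ∑ d ∈ range (n - s), y s ^ d * completeHom y s (n - s + 1 - d) = 0 := by
    rw [mul_sum]
    refine sum_eq_zero fun d hd => ?_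
    rw [mul_left_comm, mul_eq_zero_of_topDegree_lt y n hy (by omega) hmem
      (completeHom_mem_prefixSpan_pow y s _)
      (by simp at hd; omega), mul_zero]
  have hrel := completeHom_eq_zero y hy (m := s + 1) (k := n - s + 1) (by omega) (by omega)
  rw [completeHom_succ, sum_range_succ, sum_range_succ, Nat.sub_self, completeHom_zero,
    show n - s + 1 - (n - s) = 1 by omega, completeHom_one] at hrel
  linear_combination staircaseDiv y n i s * hrel - hlow

theorem sum_range_ite_ite_neg {M : Type*} [AddCommGroup M] (E : M) {i s : ℕ} (his : i < s) :
    ∑ r ∈ range s, (if r = i then E else if r = i + 1 then -E else 0) =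
      if s = i + 1 then E else 0 := by
  have hsplit : ∀ r, (if r = i then E else if r = i + 1 then -E else 0) =
      (if r = i then E else 0) + (if r = i + 1 then -E else 0) := by
    intro r
    split_ifs <;> first | omega | simp
  simp only [hsplit, sum_add_distrib, sum_ite_eq', mem_range]
  split_ifs <;> first | omega | simp

theorem staircaseDiv_mul
    (hy : ∏ t ∈ range (n + 1), (1 - PowerSeries.C (y t) * PowerSeries.X) = 1) (i : ℕ)
    {s m : ℕ} (hsm : s < m) (hm : m ≤ n) :
    staircaseDiv y n i m * y s =
      if s = i then staircase y n m else if s = i + 1 then -staircase y n m else 0 := by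
  induction s using Nat.strong_induction_on generalizing m with
  | _ s IH =>
  rcases lt_trichotomy s i with hsi | rfl | his
  · rw [if_neg hsi.ne, if_neg (by omega), staircaseDiv,
      ← prod_range_mul_prod_Ico _ (show s + 1 ≤ m by omega), mul_right_comm, ← staircaseDiv,
      staircaseDiv_eq_staircase y n (by omega), staircase_succ_mul_eq_zero y n hy (by omega),
      zero_mul]
  · rw [if_pos rfl, staircaseDiv_mul_self y n hsm (by omega)]
  · have hsum : staircaseDiv y n i s * ∑ r ∈ range s, y r =
        if s = i + 1 then staircase y n s else 0 := by
      rw [mul_sum, sum_congr rfl fun r hr => IH r (mem_range.1 hr) (mem_range.1 hr) (by omega),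
        sum_range_ite_ite_neg _ his]
    have hpow := staircaseDiv_mul_pow y n hy his (by omega)
    rw [hsum] at hpow
    rw [staircaseDiv_eq_mul y n his hsm, staircase_eq_mul y n hsm, if_neg his.ne']
    split_ifs at hpow ⊢ <;> linear_combination (∏ t ∈ Ico (s + 1) m, y t ^ (n - t)) * hpow

end Staircase

theorem prod_one_sub_C_mul_X_eq_one_of_esymm_mem {σ R : Type*} [Fintype σ] [CommRing R]
    {I : Ideal (MvPolynomial σ R)} (hI : ∀ j, 1 ≤ j → j ≤ Fintype.card σ → esymm σ R j ∈ I) :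
    ∏ i : σ, (1 - PowerSeries.C (Ideal.Quotient.mk I (X i)) * PowerSeries.X) = 1 := by
  rw [prod_one_sub_C_mul_X, card_univ, sum_range_succ', sum_eq_zero fun j hj => ?_, zero_add]
  · simp
  · have hesymm : ∑ T ∈ powersetCard (j + 1) univ, ∏ i ∈ T, Ideal.Quotient.mk I (X i) =
        Ideal.Quotient.mk I (esymm σ R (j + 1)) := by
      simp [esymm, map_sum, map_prod]
    rw [hesymm, Ideal.Quotient.eq_zero_iff_mem.2 (hI _ (by omega) (by simp at hj; omega)),
      mul_zero, map_zero, zero_mul]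

noncomputable def gammaClass (n t : ℕ) : MvPolynomial (Fin (n + 1)) ℤ ⧸ symIdeal n :=
  if h : t < n + 1 then Ideal.Quotient.mk _ (X ⟨t, h⟩) else 0

theorem mk_X_castLE {n : ℕ} (t : Fin n) :
    Ideal.Quotient.mk (symIdeal n) (X (Fin.castLE (Nat.le_succ n) t)) = gammaClass n t := by
  rw [gammaClass, dif_pos (by omega)]
  rfl

theorem prod_one_sub_C_gammaClass_mul_X (n : ℕ) :
    ∏ t ∈ range (n + 1), (1 - PowerSeries.C (gammaClass n t) * PowerSeries.X) = 1 := by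
  rw [← Fin.prod_univ_eq_prod_range
    (fun t => 1 - PowerSeries.C (gammaClass n t) * PowerSeries.X)]
  simp only [gammaClass, Fin.is_lt, dif_pos, Fin.eta]
  exact prod_one_sub_C_mul_X_eq_one_of_esymm_mem fun j hj₁ hj₂ =>
    Ideal.subset_span ⟨j, ⟨hj₁, by simpa using hj₂⟩, rfl⟩

theorem mk_gammaHat {n : ℕ} (i : Fin n) :
    Ideal.Quotient.mk (symIdeal n) (gammaHat n i) = staircaseDiv (gammaClass n) n i n := by
  rw [gammaHat, map_prod, staircaseDiv, ← Fin.prod_univ_eq_prod_range]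
  refine prod_congr rfl fun t _ => ?_
  simp only [map_pow, mk_X_castLE, Fin.val_inj]

theorem mk_gammaHatEmpty (n : ℕ) :
    Ideal.Quotient.mk (symIdeal n) (gammaHatEmpty n) = staircase (gammaClass n) n n := by
  rw [gammaHatEmpty, map_prod, staircase, ← Fin.prod_univ_eq_prod_range]
  exact prod_congr rfl fun t _ => by rw [map_pow, mk_X_castLE]

theorem gammaHat_mul_gamma_general (n : ℕ) (i j : Fin n) :
    (((j : ℕ) < (i : ℕ) ∨ (i : ℕ) + 2 ≤ (j : ℕ)) →
        gammaHat n i * X (Fin.castLE (Nat.le_succ n) j) ∈ symIdeal n) ∧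
    (j = i →
        gammaHat n i * X (Fin.castLE (Nat.le_succ n) j) - gammaHatEmpty n ∈ symIdeal n) ∧
    ((j : ℕ) = (i : ℕ) + 1 →
        gammaHat n i * X (Fin.castLE (Nat.le_succ n) j) + gammaHatEmpty n ∈ symIdeal n) := by
  have key : Ideal.Quotient.mk (symIdeal n) (gammaHat n i * X (Fin.castLE (Nat.le_succ n) j)) =
      if (j : ℕ) = i then Ideal.Quotient.mk (symIdeal n) (gammaHatEmpty n)
      else if (j : ℕ) = i + 1 then -Ideal.Quotient.mk (symIdeal n) (gammaHatEmpty n) else 0 := by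
    rw [map_mul, mk_gammaHat, mk_X_castLE, mk_gammaHatEmpty]
    exact staircaseDiv_mul _ n (prod_one_sub_C_gammaClass_mul_X n) i j.isLt le_rfl
  simp only [← Ideal.Quotient.eq_zero_iff_mem, map_sub, map_add, key]
  refine ⟨fun h => ?_, fun h => ?_, fun h => ?_⟩
  · rw [if_neg (by omega), if_neg (by omega)]
  · rw [if_pos (congrArg Fin.val h), sub_self]
  · rw [if_neg (by omega), if_pos h, neg_add_cancel]

/-- For `n ≥ 1` and `1 ≤ i, j ≤ n`:  `γ̂_i·γ_j ∈ (σ_1,…,σ_{n+1})` if `j < i` or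
`j ≥ i + 2`;  `γ̂_i·γ_j − γ̂_∅ ∈ (σ_1,…,σ_{n+1})` if `j = i`;  and
`γ̂_i·γ_j + γ̂_∅ ∈ (σ_1,…,σ_{n+1})` if `j = i + 1`. -/
theorem gammaHat_mul_gamma (n : ℕ) (hn : 1 ≤ n) (i j : Fin n) :
    (((j : ℕ) < (i : ℕ) ∨ (i : ℕ) + 2 ≤ (j : ℕ)) →
        gammaHat n i * X (Fin.castLE (Nat.le_succ n) j) ∈ symIdeal n) ∧
    (j = i →
        gammaHat n i * X (Fin.castLE (Nat.le_succ n) j) - gammaHatEmpty n ∈ symIdeal n) ∧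
    ((j : ℕ) = (i : ℕ) + 1 →
        gammaHat n i * X (Fin.castLE (Nat.le_succ n) j) + gammaHatEmpty n ∈ symIdeal n) :=
  gammaHat_mul_gamma_general n i j
end

section
/- Let n ≥ 1 and work in ℤ[γ_1,…,γ_n]. Set γ̄ = γ_1+⋯+γ_n and γ̃_i = γ̄+γ_i for each i. Then: (i) h_2^n = ∑_{k=0}^{2} (−1)^{2−k} C(n+1, 2−k) ∑_{1≤i_1≤⋯≤i_k≤n−1} γ̃_{i_1}⋯γ̃_{i_k}·γ̄^{2−k}; and (ii) for every 3 ≤ l ≤ n, h_l^{n−l+2} = ∑_{k=0}^{l} (−1)^{l−k} C(n+1, l−k) ∑_{1≤i_1≤⋯≤i_k≤n−l+2} γ̃_{i_1}⋯γ̃_{i_k}·γ̄^{l−k}, where the inner sums run over weakly increasing index sequences (multisets) in the stated range. -/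
open MvPolynomial

/-- `γ̄ = γ_1 + ⋯ + γ_n`. -/
noncomputable def gammaBar (n : ℕ) : MvPolynomial (Fin n) ℤ := ∑ j : Fin n, X j

/-- `γ̃_i = γ̄ + γ_i`. -/
noncomputable def gammaTilde (n : ℕ) (i : Fin n) : MvPolynomial (Fin n) ℤ :=
  gammaBar n + X i

/-!
For `f : α → R` and a finite set `s` with `#s = b`, write `S_k(f)` for the complete homogeneous
sum of degree `k` of the values of `f` on `s`. Shifting all values by a constant gives
`S_k(c + f) = ∑_j C(b + k - 1, j) c^j S_{k-j}(f)`: the right-hand side satisfies the recursion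
`S_{k+1}(insert a s) = S_{k+1}(s) + f a * S_k(insert a s)` that determines the left-hand side.
Applied to `c + f` and the shift `-c`, this expresses `S_l(f)` through the `S_k(c + f)` with
coefficients `(-1)^(l-k) C(b + l - 1, l - k) c^(l-k)`. With `c = γ̄`, `f = γ` and
`b = n - l + 2` the binomial top is `n + 1`, which is (ii). In (i) we have `b = n - 1`, so the top
is only `n`; the difference is made up by `h_2^n = h_2^{n-1} + γ_n γ̄`.
-/

open Finset

namespace Finset

variable {α β R : Type*} [DecidableEq α] [CommRing R]

def completeHomogeneous (s : Finset α) (f : α → R) (k : ℕ) : R :=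
  ∑ μ ∈ s.sym k, (μ.1.map f).prod

@[simp]
lemma completeHomogeneous_zero (s : Finset α) (f : α → R) : s.completeHomogeneous f 0 = 1 := by
  simp only [completeHomogeneous, sym_zero, sum_singleton]
  rfl

@[simp]
lemma completeHomogeneous_empty_succ (f : α → R) (k : ℕ) :
    (∅ : Finset α).completeHomogeneous f (k + 1) = 0 := by
  simp [completeHomogeneous]

lemma completeHomogeneous_insert {a : α} {s : Finset α} (ha : a ∉ s) (f : α → R) (k : ℕ) :
    (insert a s).completeHomogeneous f k
      = ∑ p ∈ antidiagonal k, f a ^ p.1 * s.completeHomogeneous f p.2 := by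
  rw [Nat.sum_antidiagonal_eq_sum_range_succ (fun i j => f a ^ i * s.completeHomogeneous f j),
    ← Fin.sum_univ_eq_sum_range, completeHomogeneous, ← sum_attach, attach_eq_univ,
    ← (symInsertEquiv ha).symm.sum_comp, ← univ_sigma_univ, sum_sigma]
  refine sum_congr rfl fun i _ => ?_
  rw [completeHomogeneous, mul_sum, ← sum_attach (s.sym _), attach_eq_univ]
  refine sum_congr rfl fun μ _ => ?_
  simp only [symInsertEquiv_symm_apply_coe]
  rw [show (Sym.fill a i (μ : Sym α (k - i))).1 = (μ : Sym α (k - i)).1 + Multiset.replicate i a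
    from rfl, Multiset.map_add, Multiset.prod_add, Multiset.map_replicate,
    Multiset.prod_replicate, mul_comm]

lemma completeHomogeneous_insert_succ {a : α} {s : Finset α} (ha : a ∉ s) (f : α → R) (k : ℕ) :
    (insert a s).completeHomogeneous f (k + 1)
      = s.completeHomogeneous f (k + 1) + f a * (insert a s).completeHomogeneous f k := by
  rw [completeHomogeneous_insert ha, completeHomogeneous_insert ha, Nat.sum_antidiagonal_succ,
    mul_sum]
  simp only [pow_zero, one_mul, pow_succ', mul_assoc]

lemma completeHomogeneous_one (s : Finset α) (f : α → R) :
    s.completeHomogeneous f 1 = ∑ i ∈ s, f i := by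
  induction s using Finset.induction_on with
  | empty => simp
  | insert a s ha ih =>
    rw [completeHomogeneous_insert_succ ha, sum_insert ha, ih, completeHomogeneous_zero, mul_one,
      add_comm]

lemma completeHomogeneous_map [DecidableEq β] (e : β ↪ α) (s : Finset β) (f : α → R) (k : ℕ) :
    (s.map e).completeHomogeneous f k = s.completeHomogeneous (f ∘ e) k := by
  rw [completeHomogeneous, sym_map, sum_map]
  simp [completeHomogeneous, Sym.map, Multiset.map_map]

lemma sum_antidiagonal_choose_succ_pow_mul (B k : ℕ) (c : R) (H : ℕ → R) :
    ∑ p ∈ antidiagonal (k + 1), ((B + 1).choose p.1 : R) * c ^ p.1 * H p.2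
      = ∑ p ∈ antidiagonal (k + 1), (B.choose p.1 : R) * c ^ p.1 * H p.2
        + c * ∑ p ∈ antidiagonal k, (B.choose p.1 : R) * c ^ p.1 * H p.2 := by
  rw [Nat.sum_antidiagonal_succ, Nat.sum_antidiagonal_succ, mul_sum, add_assoc, ← sum_add_distrib]
  simp only [Nat.choose_succ_succ', Nat.choose_zero_right, Nat.cast_add, pow_succ]
  congr 1
  exact sum_congr rfl fun p _ => by ring

theorem completeHomogeneous_const_add (c : R) (f : α → R) (k : ℕ) (s : Finset α) :
    s.completeHomogeneous (fun i => c + f i) k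
      = ∑ p ∈ antidiagonal k, ((#s + k - 1).choose p.1 : R) * c ^ p.1
          * s.completeHomogeneous f p.2 := by
  induction k generalizing s with
  | zero => simp
  | succ k ihk =>
    induction s using Finset.induction_on with
    | empty =>
      rw [completeHomogeneous_empty_succ, Nat.sum_antidiagonal_succ']
      simp
    | insert a s ha ihs =>
      rw [completeHomogeneous_insert_succ ha, ihs, ihk, card_insert_of_notMem ha,
        show #s + 1 + (k + 1) - 1 = #s + k + 1 by omega, show #s + 1 + k - 1 = #s + k by omega,
        show #s + (k + 1) - 1 = #s + k by omega, sum_antidiagonal_choose_succ_pow_mul, add_mul,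
        add_comm (c * _), ← add_assoc, add_left_inj]
      rw [Nat.sum_antidiagonal_succ', Nat.sum_antidiagonal_succ', mul_sum, add_assoc,
        ← sum_add_distrib]
      simp only [completeHomogeneous_zero, completeHomogeneous_insert_succ ha]
      congr 1
      exact sum_congr rfl fun p _ => by ring

theorem completeHomogeneous_eq_sum_const_add (c : R) (f : α → R) (l : ℕ) (s : Finset α) :
    s.completeHomogeneous f l
      = ∑ k ∈ range (l + 1), (-1) ^ (l - k) * ((#s + l - 1).choose (l - k) : R)
          * s.completeHomogeneous (fun i => c + f i) k * c ^ (l - k) := by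
  have h := completeHomogeneous_const_add (-c) (fun i => c + f i) l s
  simp only [neg_add_cancel_left] at h
  rw [h, Nat.sum_antidiagonal_eq_sum_range_succ_mk, ← sum_range_reflect]
  refine sum_congr rfl fun k hk => ?_
  rw [show l + 1 - 1 - k = l - k by omega, Nat.sub_sub_self (mem_range_succ_iff.mp hk), neg_pow]
  ring

lemma completeHomogeneous_univ [Fintype α] (f : α → R) (k : ℕ) :
    (univ : Finset α).completeHomogeneous f k = ∑ μ : Sym α k, (μ.1.map f).prod := by
  rw [completeHomogeneous, sym_univ]

end Finset

lemma Fin.map_castLEEmb_univ {b n : ℕ} (h : b ≤ n) :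
    univ.map (Fin.castLEEmb h) = ({i : Fin n | (i : ℕ) < b} : Finset (Fin n)) := by
  ext i
  simp only [mem_map, mem_univ, true_and, mem_filter, Fin.castLEEmb_apply]
  exact ⟨fun ⟨j, hj⟩ => hj ▸ j.isLt, fun hi => ⟨⟨i, hi⟩, rfl⟩⟩

lemma sum_sym_castLE_eq_completeHomogeneous {R : Type*} [CommRing R] {b n : ℕ} (h : b ≤ n)
    (g : Fin n → R) (k : ℕ) :
    ∑ μ : Sym (Fin b) k, (μ.1.map fun i => g (Fin.castLE h i)).prod
      = ({i : Fin n | (i : ℕ) < b} : Finset (Fin n)).completeHomogeneous g k := by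
  rw [← Fin.map_castLEEmb_univ h, completeHomogeneous_map, completeHomogeneous_univ]
  rfl

lemma hpoly_eq_completeHomogeneous (n a b : ℕ) :
    hpoly n a b = ({i : Fin n | (i : ℕ) < b} : Finset (Fin n)).completeHomogeneous X a := by
  unfold hpoly completeHomogeneous
  congr 1
  ext μ
  simp [mem_sym_iff]

lemma hpoly_eq_sum_gammaTilde (n l : ℕ) (h2l : 2 ≤ l) (hln : l ≤ n) :
    hpoly n l (n - l + 2)
      = ∑ k ∈ range (l + 1),
          C ((-1 : ℤ) ^ (l - k) * ((n + 1).choose (l - k) : ℤ)) *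
            (∑ μ : Sym (Fin (n - l + 2)) k,
              (μ.1.map fun i => gammaTilde n (Fin.castLE (by omega) i)).prod) *
            gammaBar n ^ (l - k) := by
  have hcard : #({i : Fin n | (i : ℕ) < n - l + 2} : Finset (Fin n)) + l - 1 = n + 1 := by
    rw [Fin.card_filter_val_lt]
    omega
  simp only [map_mul, map_pow, map_neg, map_one, map_natCast,
    sum_sym_castLE_eq_completeHomogeneous]
  rw [hpoly_eq_completeHomogeneous, completeHomogeneous_eq_sum_const_add (gammaBar n), hcard]
  rfl

lemma hpoly_two_eq_sum_gammaTilde (n : ℕ) (hn : 1 ≤ n) :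
    hpoly n 2 n
      = ∑ k ∈ range 3,
          C ((-1 : ℤ) ^ (2 - k) * ((n + 1).choose (2 - k) : ℤ)) *
            (∑ μ : Sym (Fin (n - 1)) k,
              (μ.1.map fun i => gammaTilde n (Fin.castLE (Nat.sub_le n 1) i)).prod) *
            gammaBar n ^ (2 - k) := by
  set s : Finset (Fin n) := {i : Fin n | (i : ℕ) < n - 1}
  set c := gammaBar n
  set a : Fin n := ⟨n - 1, by omega⟩
  have ha : a ∉ s := by simp [s, a]
  have hins : insert a s = univ := by
    ext i
    simp only [mem_insert, mem_filter, mem_univ, true_and, iff_true, s, a, Fin.ext_iff]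
    omega
  have hcard : #s = n - 1 := by simp [s, Fin.card_filter_val_lt]
  have hL : hpoly n 2 n = s.completeHomogeneous X 2 + X a * c := by
    rw [hpoly_eq_completeHomogeneous, filter_true_of_mem fun i _ => i.isLt, ← hins,
      completeHomogeneous_insert_succ ha, completeHomogeneous_one, hins]
    rfl
  have hs : s.completeHomogeneous X 1 + X a = c := by
    rw [completeHomogeneous_one, add_comm, ← sum_insert ha, hins]
    rfl
  have hT : (fun i => c + X i) = gammaTilde n := rfl
  have h2 := completeHomogeneous_eq_sum_const_add c X 2 s
  have h1 := completeHomogeneous_eq_sum_const_add c X 1 s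
  rw [hcard, show n - 1 + 2 - 1 = n by omega, hT] at h2
  rw [hcard, Nat.add_sub_cancel, hT] at h1
  have hch : ((n + 1).choose 2 : MvPolynomial (Fin n) ℤ) = n + n.choose 2 := by
    rw [Nat.choose_succ_succ', Nat.choose_one_right, Nat.cast_add]
  simp only [sum_range_succ, sum_range_zero, map_mul, map_pow, map_neg, map_one, map_natCast,
    sum_sym_castLE_eq_completeHomogeneous, completeHomogeneous_zero] at h1 h2 ⊢
  norm_num [Nat.cast_sub hn] at h1 h2 ⊢
  linear_combination hL + h2 - c ^ 2 * hch - c * h1 + c * hs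

/-- For `n ≥ 1`, with `γ̄ = γ_1+⋯+γ_n` and `γ̃_i = γ̄+γ_i`:
(i) `h_2^n = ∑_{k=0}^{2} (−1)^{2−k} C(n+1, 2−k) ∑_{1≤i_1≤⋯≤i_k≤n−1} γ̃_{i_1}⋯γ̃_{i_k}·γ̄^{2−k}`;
(ii) for `3 ≤ l ≤ n`,
`h_l^{n−l+2} = ∑_{k=0}^{l} (−1)^{l−k} C(n+1, l−k) ∑_{1≤i_1≤⋯≤i_k≤n−l+2} γ̃_{i_1}⋯γ̃_{i_k}·γ̄^{l−k}`,
the inner sums over weakly increasing sequences (size-`k` multisets) in the stated range. -/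
theorem hpoly_in_tilde_basis (n : ℕ) (hn : 1 ≤ n) :
    (hpoly n 2 n
      = ∑ k ∈ Finset.range 3,
          C ((-1 : ℤ) ^ (2 - k) * ((n + 1).choose (2 - k) : ℤ)) *
            (∑ μ : Sym (Fin (n - 1)) k,
              (μ.1.map fun i => gammaTilde n (Fin.castLE (Nat.sub_le n 1) i)).prod) *
            gammaBar n ^ (2 - k)) ∧
    (∀ l : ℕ, ∀ _hl3 : 3 ≤ l, ∀ _hln : l ≤ n,
      hpoly n l (n - l + 2)
        = ∑ k ∈ Finset.range (l + 1),
            C ((-1 : ℤ) ^ (l - k) * ((n + 1).choose (l - k) : ℤ)) *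
              (∑ μ : Sym (Fin (n - l + 2)) k,
                (μ.1.map fun i => gammaTilde n (Fin.castLE (by omega) i)).prod) *
              gammaBar n ^ (l - k)) :=
  ⟨hpoly_two_eq_sum_gammaTilde n hn, fun l hl3 hln => hpoly_eq_sum_gammaTilde n l (by omega) hln⟩
end

section
/- For all integers n ≥ 1 and 2 ≤ l ≤ n+1, setting v_i = α_i − β_i and u_i = β_i, the following identity holds in ℤ[α_1,…,α_n,β_1,…,β_n]: ∑_{m=0}^{l−2} ∑ (v_k² + 2·u_k·v_k)·v_{i_1}⋯v_{i_m}·u_{i_{m+1}}⋯u_{i_{l−2}} + ∑_{m=1}^{l−2} ∑ u_k²·v_{i_1}⋯v_{i_m}·u_{i_{m+1}}⋯u_{i_{l−2}} = ∑ (α_k²·α_{i_1}⋯α_{i_{l−2}} − β_k²·β_{i_1}⋯β_{i_{l−2}}), where in every inner sum the indices satisfy 1 ≤ k ≤ n, 1 ≤ i_1 < ⋯ < i_m ≤ n, 1 ≤ i_{m+1} < ⋯ < i_{l−2} ≤ n with k, i_1, …, i_{l−2} pairwise distinct, and on the right-hand side the sum runs over all 1 ≤ k ≤ n and 1 ≤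 i_1 < ⋯ < i_{l−2} ≤ n with all indices distinct from k. -/
open MvPolynomial

/-- `v_i = α_i − β_i` in `ℤ[α_1,…,α_n,β_1,…,β_n]` (variables indexed by
`Fin n ⊕ Fin n`, `α_i = X (inl i)`, `β_i = X (inr i)`). -/
noncomputable def vPoly (n : ℕ) (i : Fin n) : MvPolynomial (Fin n ⊕ Fin n) ℤ :=
  X (Sum.inl i) - X (Sum.inr i)

/-- `u_i = β_i`. -/
noncomputable def uPoly (n : ℕ) (i : Fin n) : MvPolynomial (Fin n ⊕ Fin n) ℤ :=
  X (Sum.inr i)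

lemma sum_reindex {ι M : Type*} [DecidableEq ι] [AddCommMonoid M] (T : Finset ι) (m r : ℕ)
    (hm : m ≤ r) (f : Finset ι → Finset ι → M) :
    ∑ A ∈ T.powersetCard m, ∑ B ∈ (T \ A).powersetCard (r - m), f A B
    = ∑ S ∈ T.powersetCard r, ∑ A ∈ S.powersetCard m, f A (S \ A) := by
  rw [Finset.sum_sigma', Finset.sum_sigma']
  apply Finset.sum_nbij' (i := fun p => (⟨p.1 ∪ p.2, p.1⟩ : Σ _ : Finset ι, Finset ι))
    (j := fun p => (⟨p.2, p.1 \ p.2⟩ : Σ _ : Finset ι, Finset ι))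
  · rintro ⟨A, B⟩ hp
    simp only [Finset.mem_sigma, Finset.mem_powersetCard] at hp ⊢
    obtain ⟨⟨hAT, hAm⟩, hBT, hBm⟩ := hp
    have hdisj : Disjoint A B := Finset.disjoint_sdiff.mono_right hBT
    refine ⟨⟨?_, ?_⟩, Finset.subset_union_left, hAm⟩
    · exact Finset.union_subset hAT (hBT.trans (Finset.sdiff_subset))
    · rw [Finset.card_union_of_disjoint hdisj, hAm, hBm]; omega
  · rintro ⟨S, A⟩ hp
    simp only [Finset.mem_sigma, Finset.mem_powersetCard] at hp ⊢
    obtain ⟨⟨hST, hSr⟩, hAS, hAm⟩ := hp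
    refine ⟨⟨hAS.trans hST, hAm⟩, ?_, ?_⟩
    · exact Finset.sdiff_subset_sdiff hST (subset_refl A)
    · rw [Finset.card_sdiff_of_subset hAS, hSr, hAm]
  · rintro ⟨A, B⟩ hp
    simp only [Finset.mem_sigma, Finset.mem_powersetCard] at hp
    obtain ⟨⟨hAT, hAm⟩, hBT, hBm⟩ := hp
    have hdisj : Disjoint A B := Finset.disjoint_sdiff.mono_right hBT
    simp [Finset.union_sdiff_cancel_left hdisj]
  · rintro ⟨S, A⟩ hp
    simp only [Finset.mem_sigma, Finset.mem_powersetCard] at hp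
    obtain ⟨⟨hST, hSr⟩, hAS, hAm⟩ := hp
    simp [Finset.union_sdiff_of_subset hAS]
  · rintro ⟨A, B⟩ hp
    simp only [Finset.mem_sigma, Finset.mem_powersetCard] at hp
    obtain ⟨⟨hAT, hAm⟩, hBT, hBm⟩ := hp
    have hdisj : Disjoint A B := Finset.disjoint_sdiff.mono_right hBT
    simp [Finset.union_sdiff_cancel_left hdisj]

lemma step1 (n r : ℕ) (c : Fin n → MvPolynomial (Fin n ⊕ Fin n) ℤ) :
    (∑ m ∈ Finset.range (r + 1),
        ∑ k : Fin n,
          ∑ A ∈ (Finset.univ.erase k).powersetCard m,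
            ∑ B ∈ ((Finset.univ.erase k) \ A).powersetCard (r - m),
              c k * (∏ i ∈ A, vPoly n i) * ∏ i ∈ B, uPoly n i)
    = ∑ k : Fin n,
        ∑ S ∈ (Finset.univ.erase k).powersetCard r,
          c k * ∏ i ∈ S, X (Sum.inl i) := by
  rw [Finset.sum_comm]
  refine Finset.sum_congr rfl fun k _ => ?_
  rw [Finset.sum_congr rfl fun m hm =>
    sum_reindex (Finset.univ.erase k) m r (by
      have := Finset.mem_range.1 hm; omega)
      (fun A B => c k * (∏ i ∈ A, vPoly n i) * ∏ i ∈ B, uPoly n i)]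
  rw [Finset.sum_comm]
  refine Finset.sum_congr rfl fun S hS => ?_
  have hcard : S.card = r := (Finset.mem_powersetCard.1 hS).2
  calc ∑ m ∈ Finset.range (r + 1), ∑ A ∈ S.powersetCard m,
        c k * (∏ i ∈ A, vPoly n i) * ∏ i ∈ S \ A, uPoly n i
      = ∑ A ∈ S.powerset, c k * ((∏ i ∈ A, vPoly n i) * ∏ i ∈ S \ A, uPoly n i) := by
        rw [Finset.sum_powerset, hcard]
        exact Finset.sum_congr rfl fun m _ => Finset.sum_congr rfl fun A _ => by ring
    _ = c k * ∑ A ∈ S.powerset, (∏ i ∈ A, vPoly n i) * ∏ i ∈ S \ A, uPoly n i := by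
        rw [Finset.mul_sum]
    _ = c k * ∏ i ∈ S, (vPoly n i + uPoly n i) := by rw [Finset.prod_add]
    _ = c k * ∏ i ∈ S, X (Sum.inl i) := by
        congr 1
        exact Finset.prod_congr rfl fun i _ => by simp [vPoly, uPoly]

/-- For `n ≥ 1` and `2 ≤ l ≤ n+1`, with `v_i = α_i − β_i` and `u_i = β_i`:
`∑_{m=0}^{l−2} ∑ (v_k² + 2u_k v_k)·v_{i_1}⋯v_{i_m}·u_{i_{m+1}}⋯u_{i_{l−2}}
 + ∑_{m=1}^{l−2} ∑ u_k²·v_{i_1}⋯v_{i_m}·u_{i_{m+1}}⋯u_{i_{l−2}}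
 = ∑ (α_k²·α_{i_1}⋯α_{i_{l−2}} − β_k²·β_{i_1}⋯β_{i_{l−2}})`,
where in each inner sum `k` and the pairwise distinct indices `i_1<⋯<i_m`,
`i_{m+1}<⋯<i_{l−2}` are encoded as `k : Fin n` together with disjoint finsets
`A` (size `m`) and `B` (size `l−2−m`) avoiding `k`; on the right the sum runs
over `k` and finsets `S` of size `l−2` avoiding `k`. -/
theorem transgression_esymm_sq_identity (n l : ℕ) (hn : 1 ≤ n) (hl2 : 2 ≤ l)
    (hl : l ≤ n + 1) :
    (∑ m ∈ Finset.range (l - 1),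
        ∑ k : Fin n,
          ∑ A ∈ (Finset.univ.erase k).powersetCard m,
            ∑ B ∈ ((Finset.univ.erase k) \ A).powersetCard (l - 2 - m),
              (vPoly n k ^ 2 + 2 * uPoly n k * vPoly n k)
                * (∏ i ∈ A, vPoly n i) * ∏ i ∈ B, uPoly n i)
    + (∑ m ∈ Finset.Icc 1 (l - 2),
        ∑ k : Fin n,
          ∑ A ∈ (Finset.univ.erase k).powersetCard m,
            ∑ B ∈ ((Finset.univ.erase k) \ A).powersetCard (l - 2 - m),
              uPoly n k ^ 2 * (∏ i ∈ A, vPoly n i) * ∏ i ∈ B, uPoly n i)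
    = ∑ k : Fin n,
        ∑ S ∈ (Finset.univ.erase k).powersetCard (l - 2),
          ((X (Sum.inl k) : MvPolynomial (Fin n ⊕ Fin n) ℤ) ^ 2 * ∏ i ∈ S, X (Sum.inl i)
            - X (Sum.inr k) ^ 2 * ∏ i ∈ S, X (Sum.inr i)) := by
  set r := l - 2 with hr
  have hl1 : l - 1 = r + 1 := by omega
  rw [hl1]
  -- second sum: extend Icc 1 r to range (r+1)
  have hins : Finset.range (r + 1) = insert 0 (Finset.Icc 1 r) := by
    ext x; simp [Finset.mem_range, Finset.mem_Icc]; omega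
  set F : ℕ → MvPolynomial (Fin n ⊕ Fin n) ℤ := fun m =>
    ∑ k : Fin n,
      ∑ A ∈ (Finset.univ.erase k).powersetCard m,
        ∑ B ∈ ((Finset.univ.erase k) \ A).powersetCard (r - m),
          uPoly n k ^ 2 * (∏ i ∈ A, vPoly n i) * ∏ i ∈ B, uPoly n i with hF
  have hrange : ∑ m ∈ Finset.range (r + 1), F m = F 0 + ∑ m ∈ Finset.Icc 1 r, F m := by
    rw [hins, Finset.sum_insert (by simp)]
  have hIcc : ∑ m ∈ Finset.Icc 1 r, F m = (∑ m ∈ Finset.range (r + 1), F m) - F 0 := by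
    rw [hrange]; ring
  have hF0 : F 0 = ∑ k : Fin n,
      ∑ S ∈ (Finset.univ.erase k).powersetCard r,
        uPoly n k ^ 2 * ∏ i ∈ S, X (Sum.inr i) := by
    rw [hF]
    refine Finset.sum_congr rfl fun k _ => ?_
    rw [Finset.powersetCard_zero, Finset.sum_singleton, Finset.sdiff_empty, Nat.sub_zero]
    exact Finset.sum_congr rfl fun B _ => by simp [uPoly]
  rw [hIcc, step1 n r (fun k => uPoly n k ^ 2),
    step1 n r (fun k => vPoly n k ^ 2 + 2 * uPoly n k * vPoly n k), hF0]
  rw [← Finset.sum_sub_distrib, ← Finset.sum_add_distrib]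
  refine Finset.sum_congr rfl fun k _ => ?_
  rw [← Finset.sum_sub_distrib, ← Finset.sum_add_distrib]
  refine Finset.sum_congr rfl fun S _ => ?_
  simp only [vPoly, uPoly]
  ring
end
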